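/- arXiv:1503.03283 — 11 statements merged into one kernel-verified Lean document; each statement's English description precedes it below -/
import Mathlib

section
/- For every odd integer n ≥ 3, every acyclic proper edge coloring of the complete bipartite graph K_{n,n} uses at least n+2 colors; equivalently, the acyclic chromatic index satisfies a'(K_{n,n}) ≥ n+2. -/
open SimpleGraph

/-- A proper edge coloring of `G` with `k` colors: any two distinct edges
sharing a vertex receive different colors. -/
def IsProperEdgeColoring {V : Type*} (G : SimpleGraph V) {k : ℕ}
    (C : G.edgeSet → Fin k) : Prop :=
  ∀ e f : G.edgeSet, e ≠ f →
    (∃ v : V, v ∈ (e : Sym2 V) ∧ v ∈ (f : Sym2 V)) → C e ≠ C f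

/-- An edge coloring is acyclic if no cycle of `G` is bichromatic, i.e. no cycle
has all its edges colored with only two colors. -/
def IsAcyclicEdgeColoring {V : Type*} (G : SimpleGraph V) {k : ℕ}
    (C : G.edgeSet → Fin k) : Prop :=
  ∀ (v : V) (w : G.Walk v v), w.IsCycle →
    ¬ ∃ c₁ c₂ : Fin k, ∀ (e : Sym2 V) (he : e ∈ w.edges),
      C ⟨e, w.edges_subset_edgeSet he⟩ = c₁ ∨ C ⟨e, w.edges_subset_edgeSet he⟩ = c₂

/-- The acyclic chromatic index: the least `k` such that `G` admits an acyclic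
proper edge coloring with `k` colors. -/
noncomputable def acyclicChromaticIndex {V : Type*} (G : SimpleGraph V) : ℕ :=
  sInf {k : ℕ | ∃ C : G.edgeSet → Fin k,
    IsProperEdgeColoring G C ∧ IsAcyclicEdgeColoring G C}

/-!
Read a proper coloring of `K_{n,n}` as an `n × n` array with injective rows and columns, so that
every color class is a partial permutation. For colors `c ≠ d` and permutations `e_c, e_d`
extending their classes, a cycle of `e_d⁻¹ * e_c` on whose rows both classes are defined traces a
bichromatic cycle of the graph; so in an acyclic coloring every cycle of `e_d⁻¹ * e_c` meets a row
where `c` or `d` is missing.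

Suppose at most `n + 1` colors are used. Two colors cannot fill every row, and the `n²` entries
then force exactly `n + 1` colors: one color `c₀` fills every row and each other color `c`
misses exactly one row `R c`. Extend each color class to a permutation `E c`. Every cycle of
`(E c)⁻¹ * E c₀` passes through `R c`, so it is an `n`-cycle, which is even as `n` is odd: all
`E c` have the same sign. Then `(E d)⁻¹ * E c` is even and all its cycles pass through `R c` or
`R d`; a fixed point would leave a single cycle of even length `n - 1`, so there is none. Hence the
`n + 1` permutations `E c` disagree everywhere, which is impossible on `n` points.
-/

open Equiv Equiv.Perm Function Finset

namespace Equiv.Perm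

variable {α : Type*} [Fintype α] [DecidableEq α] {σ : Perm α} {u v : α}

theorem sign_eq_one_of_forall_sameCycle (hodd : Odd (Fintype.card α))
    (hσ : ∀ z, σ.SameCycle z u) : sign σ = 1 := by
  by_cases hu : σ u = u
  · have : σ = 1 := ext fun z => by
      rw [(hσ z).eq_of_right hu]
      exact hu
    simp [this]
  · have hsupp : σ.support = univ := eq_univ_of_forall fun z => mem_support.2 fun hz =>
      hu ((hσ z).eq_of_left hz ▸ hz)
    have hcyc : σ.IsCycle := ⟨u, hu, fun y _ => (hσ y).symm⟩
    rw [hcyc.sign, hsupp, card_univ, hodd.neg_one_pow, neg_neg]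

-- Unless `v` is fixed as well, `σ` is a single cycle of even length `card α - 1`, hence odd.
theorem false_of_fixed_of_forall_sameCycle_or (hn : 3 ≤ Fintype.card α)
    (hodd : Odd (Fintype.card α)) (hsign : sign σ = 1)
    (hσ : ∀ z, σ.SameCycle z u ∨ σ.SameCycle z v) (hu : σ u = u) : False := by
  have hv_of_ne : ∀ z, z ≠ u → σ.SameCycle z v := fun z hz =>
    (hσ z).resolve_left fun h => hz (h.eq_of_right hu)
  by_cases hv : σ v = v
  · have : univ ⊆ ({u, v} : Finset α) := fun z _ => by
      rcases hσ z with h | h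
      · simp [h.eq_of_right hu]
      · simp [h.eq_of_right hv]
    have := (card_le_card this).trans (card_le_two (a := u) (b := v))
    rw [card_univ] at this
    omega
  · have hsupp : σ.support = univ.erase u := by
      ext z
      simp only [mem_support, mem_erase, mem_univ, and_true]
      refine ⟨fun hz h => hz (h ▸ hu), fun hz hfix => hv ?_⟩
      rw [← (hv_of_ne z hz).eq_of_left hfix]
      exact hfix
    have hcyc : σ.IsCycle := ⟨v, hv, fun y hy => (hv_of_ne y fun h => hy (h ▸ hu)).symm⟩
    have heven : Even (Fintype.card α - 1) := by
      obtain ⟨m, hm⟩ := hodd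
      exact ⟨m, by omega⟩
    rw [hcyc.sign, hsupp, card_erase_of_mem (mem_univ u), card_univ, heven.neg_one_pow] at hsign
    exact absurd hsign (by decide)

theorem apply_ne_self_of_forall_sameCycle_or (hn : 3 ≤ Fintype.card α)
    (hodd : Odd (Fintype.card α)) (hsign : sign σ = 1)
    (hσ : ∀ z, σ.SameCycle z u ∨ σ.SameCycle z v) (z : α) : σ z ≠ z := by
  intro hz
  rcases hσ z with h | h
  · exact false_of_fixed_of_forall_sameCycle_or hn hodd hsign hσ (h.eq_of_left hz ▸ hz)
  · exact false_of_fixed_of_forall_sameCycle_or hn hodd hsign (fun w => (hσ w).symm)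
      (h.eq_of_left hz ▸ hz)

end Equiv.Perm

theorem card_eq_and_exists_eq_of_sum_eq {ι : Type*} [Fintype ι] [DecidableEq ι]
    {n : ℕ} (f : ι → ℕ) (hn : 2 ≤ n) (hcard : Fintype.card ι ≤ n + 1) (hle : ∀ i, f i ≤ n)
    (hsum : ∑ i, f i = n * n) (huniq : ∀ i j, f i = n → f j = n → i = j) :
    Fintype.card ι = n + 1 ∧ ∃ i₀, f i₀ = n ∧ ∀ i ≠ i₀, f i = n - 1 := by
  obtain ⟨m, rfl⟩ : ∃ m, n = m + 1 := ⟨n - 1, by omega⟩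
  obtain ⟨i₀, hi₀⟩ : ∃ i₀, f i₀ = m + 1 := by
    by_contra! h
    have : ∑ i, f i ≤ ∑ _i : ι, m := sum_le_sum fun i _ => by have := hle i; have := h i; omega
    rw [sum_const, card_univ, smul_eq_mul, hsum] at this
    nlinarith
  have hrest : ∀ i ∈ univ.erase i₀, f i ≤ m := fun i hi => by
    have := hle i
    have : f i ≠ m + 1 := fun h => ne_of_mem_erase hi (huniq _ _ h hi₀)
    omega
  have hsum_rest : ∑ i ∈ univ.erase i₀, f i = (m + 1) * m := by
    have := add_sum_erase univ f (mem_univ i₀)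
    rw [hsum, hi₀] at this
    linarith
  have hsum_rest_le : (m + 1) * m ≤ (Fintype.card ι - 1) * m := by
    simpa [← hsum_rest, card_erase_of_mem] using sum_le_sum hrest
  have hcard_eq : Fintype.card ι = m + 2 := by
    have := Nat.le_of_mul_le_mul_right hsum_rest_le (by omega)
    omega
  refine ⟨hcard_eq, i₀, hi₀, fun i hi => ?_⟩
  refine (sum_eq_sum_iff_of_le hrest).1 ?_ i (mem_erase.2 ⟨hi, mem_univ i⟩)
  simp [hsum_rest, card_erase_of_mem, hcard_eq]

section ColorArray

variable {α β κ : Type*}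

/-- `A` has no alternating cycle `x₀ y₀ x₁ y₁ … y_{t-1} x_t = x₀` with `A (x i) (y i) = c` and
`A (x (i+1)) (y i) = d`: in `K_{α,β}` colored by `A` this is a bichromatic cycle of length `2t`. -/
def AlternatingCycleFree (A : α → β → κ) : Prop :=
  ∀ (c d : κ) (t : ℕ) (x : ℕ → α) (y : ℕ → β), 2 ≤ t → Set.InjOn x (Set.Iio t) →
    Set.InjOn y (Set.Iio t) → x t = x 0 → (∀ i < t, A (x i) (y i) = c) →
    (∀ i < t, A (x (i + 1)) (y i) = d) → False

section Rows

variable [Fintype α] [Fintype β] [DecidableEq κ]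

def rowsContaining (A : α → β → κ) (c : κ) : Finset α :=
  {i | ∃ j, A i j = c}

theorem sum_card_rowsContaining [Fintype κ] {A : α → β → κ} (hrow : ∀ i, Injective (A i)) :
    ∑ c, #(rowsContaining A c) = Fintype.card α * Fintype.card β := by
  have := sum_card_bipartiteAbove_eq_sum_card_bipartiteBelow (s := (univ : Finset κ))
    (t := (univ : Finset α)) (r := fun c i => ∃ j, A i j = c)
  simp only [bipartiteAbove, bipartiteBelow] at this
  simp only [rowsContaining, this]
  have hrow_image : ∀ i, ({c | ∃ j, A i j = c} : Finset κ) = univ.image (A i) := fun i => by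
    ext; simp
  simp [hrow_image, card_image_of_injective _ (hrow _)]

theorem exists_perm_forall_mem_rowsContaining {A : α → α → κ} (hcol : ∀ j, Injective (A · j))
    (c : κ) : ∃ e : Perm α, ∀ i ∈ rowsContaining A c, A i (e i) = c := by
  let f : α → α := fun i => if h : ∃ j, A i j = c then h.choose else i
  have hf : ∀ i ∈ rowsContaining A c, A i (f i) = c := fun i hi => by
    have hi : ∃ j, A i j = c := by simpa [rowsContaining] using hi
    simpa [f, hi] using hi.choose_spec
  have hinj : Set.InjOn f (rowsContaining A c) := fun i hi i' hi' he =>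
    hcol (f i) (by simp only; rw [hf i hi, he, hf i' hi'])
  obtain ⟨g, hg⟩ := Set.MapsTo.exists_equiv_extend_of_card_eq (t := univ) card_univ.symm
    (fun _ _ => mem_coe.2 (mem_univ _)) hinj
  exact ⟨g.trans (subtypeUnivEquiv mem_univ), fun i hi => by simp [hg i hi, hf i hi]⟩

end Rows

-- Otherwise the orbit `z, σ z, σ² z, …` of `σ = ed⁻¹ * ec`, with the columns `ec (σ^m z)`, is an
-- alternating cycle.
theorem AlternatingCycleFree.exists_sameCycle_ne [Fintype α] {A : α → α → κ}
    (hA : AlternatingCycleFree A) {c d : κ} (hcd : c ≠ d) (ec ed : Perm α) (z : α) :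
    ∃ p, (ed⁻¹ * ec).SameCycle z p ∧ (A p (ec p) ≠ c ∨ A p (ed p) ≠ d) := by
  by_contra! h
  set σ := ed⁻¹ * ec
  have horbit : ∀ m, A (σ^[m] z) (ec (σ^[m] z)) = c ∧ A (σ^[m] z) (ed (σ^[m] z)) = d :=
    fun m => h _ (by rw [iterate_eq_pow]; exact sameCycle_pow_right.2 (SameCycle.refl _ _))
  have hstep : ∀ w, ed (σ w) = ec w := fun w => by simp [σ]
  set t := minimalPeriod σ z
  have ht : 2 ≤ t := by
    have hpos : 0 < t := minimalPeriod_pos_of_mem_periodicPts (σ.injective.mem_periodicPts z)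
    refine (Nat.two_le_iff t).2 ⟨hpos.ne', fun h1 => hcd ?_⟩
    have hfix : σ z = z := by simpa [t, h1] using iterate_minimalPeriod (f := σ) (x := z)
    rw [← (horbit 0).1, ← (horbit 0).2]
    simp [← hstep z, hfix]
  have hx : Set.InjOn (σ^[·] z) (Set.Iio t) := iterate_injOn_Iio_minimalPeriod
  refine hA c d t (σ^[·] z) (fun m => ec (σ^[m] z)) ht hx
    (fun i hi i' hi' he => hx hi hi' (ec.injective he)) iterate_minimalPeriod
    (fun i _ => (horbit i).1) (fun i _ => ?_)
  rw [← hstep, ← iterate_succ_apply' σ]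
  exact (horbit (i + 1)).2

variable [Fintype α] [DecidableEq α] {A : α → α → κ}

theorem AlternatingCycleFree.sign_eq (hA : AlternatingCycleFree A) (hodd : Odd (Fintype.card α))
    {c d : κ} (hcd : c ≠ d) {ec ed : Perm α} {r : α} (hec : ∀ i, A i (ec i) = c)
    (hed : ∀ i, A i (ed i) ≠ d → i = r) : sign ed = sign ec := by
  have hcycle : ∀ z, (ed⁻¹ * ec).SameCycle z r := fun z => by
    obtain ⟨p, hzp, hp | hp⟩ := hA.exists_sameCycle_ne hcd ec ed z
    · exact absurd (hec p) hp
    · exact hed p hp ▸ hzp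
  have := sign_eq_one_of_forall_sameCycle hodd hcycle
  rwa [map_mul, sign_inv, mul_eq_one_iff_eq_inv, Int.units_inv_eq_self] at this

theorem AlternatingCycleFree.apply_ne_apply (hA : AlternatingCycleFree A)
    (hn : 3 ≤ Fintype.card α) (hodd : Odd (Fintype.card α)) {c d : κ} (hcd : c ≠ d)
    {ec ed : Perm α} {rc rd : α} (hec : ∀ i, A i (ec i) ≠ c → i = rc)
    (hed : ∀ i, A i (ed i) ≠ d → i = rd) (hsign : sign ec = sign ed) (z : α) : ec z ≠ ed z := by
  have hcycle : ∀ z, (ed⁻¹ * ec).SameCycle z rc ∨ (ed⁻¹ * ec).SameCycle z rd := fun z => by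
    obtain ⟨p, hzp, hp⟩ := hA.exists_sameCycle_ne hcd ec ed z
    exact hp.imp (fun hp => hec p hp ▸ hzp) (fun hp => hed p hp ▸ hzp)
  have hsign_one : sign (ed⁻¹ * ec) = 1 := by
    rw [map_mul, sign_inv, hsign, Int.units_mul_self]
  intro he
  exact apply_ne_self_of_forall_sameCycle_or hn hodd hsign_one hcycle z (by simp [he])

theorem card_add_two_le_of_alternatingCycleFree [Fintype κ] [DecidableEq κ]
    (hrow : ∀ i, Injective (A i)) (hcol : ∀ j, Injective (A · j)) (hA : AlternatingCycleFree A)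
    (hn : 3 ≤ Fintype.card α) (hodd : Odd (Fintype.card α)) :
    Fintype.card α + 2 ≤ Fintype.card κ := by
  by_contra! hκ
  obtain ⟨z₀⟩ : Nonempty α := Fintype.card_pos_iff.1 (by omega)
  choose E hE using exists_perm_forall_mem_rowsContaining hcol
  have hfull : ∀ c, #(rowsContaining A c) = Fintype.card α → ∀ i, A i (E c i) = c :=
    fun c hc i => hE c i (eq_univ_of_card _ hc ▸ mem_univ i)
  have hfull_unique : ∀ c d, #(rowsContaining A c) = Fintype.card α →
      #(rowsContaining A d) = Fintype.card α → c = d := by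
    intro c d hc hd
    by_contra hcd
    obtain ⟨p, -, hp⟩ := hA.exists_sameCycle_ne hcd (E c) (E d) z₀
    exact hp.elim (· (hfull c hc p)) (· (hfull d hd p))
  obtain ⟨hκ_card, c₀, hc₀, hdeficient⟩ := card_eq_and_exists_eq_of_sum_eq _ (by omega)
    (by omega) (fun c => card_le_univ _) (sum_card_rowsContaining hrow) hfull_unique
  have hmissing : ∀ c, ∃ r, ∀ i, A i (E c i) ≠ c → i = r := by
    intro c
    by_cases hc : c = c₀
    · exact ⟨z₀, fun i hi => absurd (hfull c (hc ▸ hc₀) i) hi⟩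
    · have : #(rowsContaining A c)ᶜ = 1 := by rw [card_compl, hdeficient c hc]; omega
      obtain ⟨r, hr⟩ := card_eq_one.1 this
      exact ⟨r, fun i hi => mem_singleton.1 (hr ▸ mem_compl.2 fun hmem => hi (hE c i hmem))⟩
  choose R hR using hmissing
  have hsign : ∀ c, sign (E c) = sign (E c₀) := fun c => by
    by_cases hc : c = c₀
    · rw [hc]
    · exact hA.sign_eq hodd (Ne.symm hc) (hfull c₀ hc₀) (hR c)
  have := Fintype.card_le_of_injective (fun c => E c z₀) fun c d he => by_contra fun hcd =>
    hA.apply_ne_apply hn hodd hcd (hR c) (hR d) ((hsign c).trans (hsign d).symm) z₀ he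
  omega

end ColorArray

section InjectiveColoring

variable {V : Type*} {G : SimpleGraph V} {k : ℕ} {C : G.edgeSet → Fin k}

theorem isProperEdgeColoring_of_injective (hC : Injective C) : IsProperEdgeColoring G C :=
  fun _ _ hef _ h => hef (hC h)

theorem isAcyclicEdgeColoring_of_injective (hC : Injective C) : IsAcyclicEdgeColoring G C := by
  rintro v w hw ⟨c₁, c₂, hcol⟩
  let colors := w.edges.attach.map fun e => C ⟨e.1, w.edges_subset_edgeSet e.2⟩
  have hnodup : colors.Nodup := (List.nodup_attach.2 hw.edges_nodup).map fun e f h =>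
    Subtype.ext (congrArg (fun e : G.edgeSet => (e : Sym2 V)) (hC h))
  have hsub : colors ⊆ [c₁, c₂] := by
    simp only [colors, List.subset_def, List.mem_map, List.mem_attach, true_and]
    rintro _ ⟨⟨e, he⟩, rfl⟩
    simpa using hcol e he
  have := (hnodup.subperm hsub).length_le
  simp only [colors, List.length_map, List.length_attach, Walk.length_edges, List.length_cons,
    List.length_nil] at this
  have := hw.three_le_length
  omega

theorem le_acyclicChromaticIndex [Finite G.edgeSet] {m : ℕ}
    (h : ∀ k (C : G.edgeSet → Fin k), IsProperEdgeColoring G C → IsAcyclicEdgeColoring G C →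
      m ≤ k) : m ≤ acyclicChromaticIndex G := by
  have := Fintype.ofFinite G.edgeSet
  let C := Fintype.equivFin G.edgeSet
  refine le_csInf ⟨_, C, isProperEdgeColoring_of_injective C.injective,
    isAcyclicEdgeColoring_of_injective C.injective⟩ ?_
  rintro k ⟨C, hp, ha⟩
  exact h k C hp ha

end InjectiveColoring

section CompleteBipartite

variable {α β : Type*}

def alternatingWalk : (x : ℕ → α) → (y : ℕ → β) → (r : ℕ) →
    (completeBipartiteGraph α β).Walk (.inl (x 0)) (.inl (x r))
  | _, _, 0 => .nil
  | x, y, r + 1 => .cons (v := .inr (y 0)) (by simp) (.cons (by simp)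
      (alternatingWalk (fun i => x (i + 1)) (fun i => y (i + 1)) r))

theorem mem_support_alternatingWalk {x : ℕ → α} {y : ℕ → β} {r : ℕ} {v : α ⊕ β}
    (hv : v ∈ (alternatingWalk x y r).support) :
    (∃ i ≤ r, v = .inl (x i)) ∨ ∃ i < r, v = .inr (y i) := by
  induction r generalizing x y with
  | zero => simp_all [alternatingWalk]
  | succ r ih =>
    simp only [alternatingWalk, Walk.support_cons, List.mem_cons] at hv
    rcases hv with rfl | rfl | hv
    · exact .inl ⟨0, by omega, rfl⟩
    · exact .inr ⟨0, by omega, rfl⟩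
    · rcases ih hv with ⟨i, hi, rfl⟩ | ⟨i, hi, rfl⟩
      · exact .inl ⟨i + 1, by omega, rfl⟩
      · exact .inr ⟨i + 1, by omega, rfl⟩

theorem mem_edges_alternatingWalk {x : ℕ → α} {y : ℕ → β} {r : ℕ} {e : Sym2 (α ⊕ β)}
    (he : e ∈ (alternatingWalk x y r).edges) :
    ∃ i < r, e = s(.inl (x i), .inr (y i)) ∨ e = s(.inr (y i), .inl (x (i + 1))) := by
  induction r generalizing x y with
  | zero => simp_all [alternatingWalk]
  | succ r ih =>
    simp only [alternatingWalk, Walk.edges_cons, List.mem_cons] at he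
    rcases he with rfl | rfl | he
    · exact ⟨0, by omega, .inl rfl⟩
    · exact ⟨0, by omega, .inr rfl⟩
    · obtain ⟨i, hi, he⟩ := ih he
      exact ⟨i + 1, by omega, he⟩

theorem isPath_alternatingWalk {x : ℕ → α} {y : ℕ → β} {r : ℕ} (hx : Set.InjOn x (Set.Iic r))
    (hy : Set.InjOn y (Set.Iio r)) : (alternatingWalk x y r).IsPath := by
  induction r generalizing x y with
  | zero => exact .nil
  | succ r ih =>
    have hx' : Set.InjOn (fun i => x (i + 1)) (Set.Iic r) := fun i hi j hj h =>
      Nat.succ_injective (hx (by simpa using hi) (by simpa using hj) h)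
    have hy' : Set.InjOn (fun i => y (i + 1)) (Set.Iio r) := fun i hi j hj h =>
      Nat.succ_injective (hy (by simpa using hi) (by simpa using hj) h)
    simp only [alternatingWalk, Walk.cons_isPath_iff, Walk.support_cons, List.mem_cons,
      reduceCtorEq, false_or]
    refine ⟨⟨ih hx' hy', fun hmem => ?_⟩, fun hmem => ?_⟩
    · rcases mem_support_alternatingWalk hmem with ⟨i, -, h⟩ | ⟨i, hi, h⟩
      · cases h
      · have := hy (by simp : 0 ∈ Set.Iio (r + 1)) (by simpa using hi) (Sum.inr_injective h)
        omega
    · rcases mem_support_alternatingWalk hmem with ⟨i, hi, h⟩ | ⟨i, -, h⟩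
      · have := hx (by simp : 0 ∈ Set.Iic (r + 1)) (by simpa using hi) (Sum.inl_injective h)
        omega
      · cases h

def alternatingCycle (x : ℕ → α) (y : ℕ → β) (s : ℕ) :
    (completeBipartiteGraph α β).Walk (.inl (x 0)) (.inl (x 0)) :=
  .cons (v := .inr (y s)) (by simp) (.cons (by simp) (alternatingWalk x y s).reverse)

theorem isCycle_alternatingCycle {x : ℕ → α} {y : ℕ → β} {s : ℕ} (hs : 1 ≤ s)
    (hx : Set.InjOn x (Set.Iic s)) (hy : Set.InjOn y (Set.Iic s)) :
    (alternatingCycle x y s).IsCycle := by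
  have hys : ∀ i < s, y i ≠ y s := fun i hi h => by
    have := hy (by simp; omega) (by simp) h
    omega
  have hys_support : .inr (y s) ∉ (alternatingWalk x y s).support := fun hmem => by
    rcases mem_support_alternatingWalk hmem with ⟨i, -, h⟩ | ⟨i, hi, h⟩
    · cases h
    · exact hys i hi (Sum.inr_injective h).symm
  have hpath := isPath_alternatingWalk hx (hy.mono Set.Iio_subset_Iic_self)
  rw [alternatingCycle, Walk.cons_isCycle_iff]
  refine ⟨by simp [hpath, hys_support], ?_⟩
  simp only [Walk.edges_cons, Walk.edges_reverse, List.mem_cons, List.mem_reverse]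
  rintro (h | h)
  · have := hx (by simp : 0 ∈ Set.Iic s) (by simp : s ∈ Set.Iic s) (by simpa using h)
    omega
  · obtain ⟨i, hi, h | h⟩ := mem_edges_alternatingWalk h <;>
      simp [(hys i hi).symm] at h

variable {k : ℕ} (C : (completeBipartiteGraph α β).edgeSet → Fin k)

def colorMatrix (a : α) (b : β) : Fin k :=
  C ⟨s(.inl a, .inr b), by simp⟩

theorem color_eq_colorMatrix {e : Sym2 (α ⊕ β)} (he : e ∈ (completeBipartiteGraph α β).edgeSet)
    {a : α} {b : β} (hab : e = s(.inl a, .inr b) ∨ e = s(.inr b, .inl a)) :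
    C ⟨e, he⟩ = colorMatrix C a b := by
  obtain rfl : e = s(.inl a, .inr b) := hab.elim id (·.trans Sym2.eq_swap)
  rfl

variable {C}

theorem IsProperEdgeColoring.injective_colorMatrix_row
    (hC : IsProperEdgeColoring (completeBipartiteGraph α β) C) (a : α) :
    Injective (colorMatrix C a) := by
  intro b b' h
  by_contra hne
  refine hC _ _ (fun heq => hne ?_) ⟨.inl a, by simp, by simp⟩ h
  simpa using congrArg Subtype.val heq

theorem IsProperEdgeColoring.injective_colorMatrix_col
    (hC : IsProperEdgeColoring (completeBipartiteGraph α β) C) (b : β) :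
    Injective (colorMatrix C · b) := by
  intro a a' h
  by_contra hne
  refine hC _ _ (fun heq => hne ?_) ⟨.inr b, by simp, by simp⟩ h
  simpa using congrArg Subtype.val heq

theorem IsAcyclicEdgeColoring.alternatingCycleFree
    (hC : IsAcyclicEdgeColoring (completeBipartiteGraph α β) C) :
    AlternatingCycleFree (colorMatrix C) := by
  intro c d t x y ht hx hy hxt hc hd
  obtain ⟨s, rfl⟩ : ∃ s, t = s + 1 := ⟨t - 1, by omega⟩
  have hIic : Set.Iic s ⊆ Set.Iio (s + 1) := fun i hi => by simp at hi ⊢; omega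
  refine hC _ _ (isCycle_alternatingCycle (by omega) (hx.mono hIic) (hy.mono hIic))
    ⟨c, d, fun e he => ?_⟩
  simp only [alternatingCycle, Walk.edges_cons, Walk.edges_reverse, List.mem_cons,
    List.mem_reverse] at he
  rcases he with rfl | rfl | he
  · have := hd s (by omega)
    rw [hxt] at this
    exact .inr this
  · exact .inl ((color_eq_colorMatrix C _ (.inr rfl)).trans (hc s (by omega)))
  · obtain ⟨i, hi, rfl | rfl⟩ := mem_edges_alternatingWalk he
    · exact .inl (hc i (by omega))
    · exact .inr ((color_eq_colorMatrix C _ (.inr rfl)).trans (hd i (by omega)))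

end CompleteBipartite

/-- For every odd `n ≥ 3`, every acyclic proper edge coloring of `K_{n,n}` uses at
least `n + 2` colors; equivalently `a'(K_{n,n}) ≥ n + 2`. -/
theorem stmt0 (n : ℕ) (hn : 3 ≤ n) (hodd : Odd n) :
    (∀ (k : ℕ) (C : (completeBipartiteGraph (Fin n) (Fin n)).edgeSet → Fin k),
        IsProperEdgeColoring (completeBipartiteGraph (Fin n) (Fin n)) C →
        IsAcyclicEdgeColoring (completeBipartiteGraph (Fin n) (Fin n)) C →
        n + 2 ≤ k) ∧
      n + 2 ≤ acyclicChromaticIndex (completeBipartiteGraph (Fin n) (Fin n)) := by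
  suffices hbound : ∀ (k : ℕ) (C : (completeBipartiteGraph (Fin n) (Fin n)).edgeSet → Fin k),
      IsProperEdgeColoring _ C → IsAcyclicEdgeColoring _ C → n + 2 ≤ k from
    ⟨hbound, le_acyclicChromaticIndex hbound⟩
  intro k C hp ha
  simpa using card_add_two_le_of_alternatingCycleFree hp.injective_colorMatrix_row
    hp.injective_colorMatrix_col ha.alternatingCycleFree (by simpa using hn) (by simpa using hodd)
end

section
/- Let n ≥ 2 and let σ, τ be distinct permutations of Fin n. The spanning subgraph of K_{n,n} with edge set M_σ ∪ M_τ is a Hamiltonian cycle of K_{n,n} if and only if the permutation σ⁻¹ ∘ τ is a single cycle whose support is all of Fin n (i.e., an n-cycle). -/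
/-!
The spanning subgraph with edge set `M_σ ∪ M_τ` is a Hamiltonian cycle of `K_{n,n}` exactly when
it is connected and 2-regular. Its vertex `inl a` has neighbours `inr (σ a)` and `inr (τ a)`, so
2-regularity means that `π = σ⁻¹ * τ` has no fixed point. Since `inl a — inr (τ a) — inl (π a)` is
a path and every `inr b` is adjacent to `inl (σ⁻¹ b)`, the connected components correspond to the
cycles of `π`, so connectedness means that all points lie in one cycle of `π`.
-/

open SimpleGraph

/-- The perfect matching of `K_{n,n}` associated with a permutation `σ` of `Fin n`:
its edge set is `{s(Sum.inl m, Sum.inr (σ m)) : m ∈ Fin n}`. -/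
def matchingEdges (n : ℕ) (σ : Equiv.Perm (Fin n)) : Set (Sym2 (Fin n ⊕ Fin n)) :=
  {e | ∃ m : Fin n, e = s(Sum.inl m, Sum.inr (σ m))}

namespace Equiv.Perm

theorem isCycle_and_support_eq_univ_iff {α : Type*} [Fintype α] [DecidableEq α] (π : Perm α) :
    π.IsCycle ∧ π.support = Finset.univ ↔
      Nonempty α ∧ (∀ a, π a ≠ a) ∧ ∀ a b, π.SameCycle a b := by
  constructor
  · rintro ⟨hπ, hsupp⟩
    have hfix (a : α) : π a ≠ a := mem_support.mp (hsupp ▸ Finset.mem_univ a)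
    refine ⟨?_, hfix, fun a b ↦ hπ.sameCycle (hfix a) (hfix b)⟩
    obtain ⟨x, -⟩ := hπ
    exact ⟨x⟩
  · rintro ⟨⟨x⟩, hfix, hsame⟩
    exact ⟨⟨x, hfix x, fun y _ ↦ hsame x y⟩,
      Finset.eq_univ_iff_forall.mpr fun a ↦ mem_support.mpr (hfix a)⟩

end Equiv.Perm

namespace SimpleGraph

variable {V : Type*} [DecidableEq V] {G K : SimpleGraph V} {v : V}

theorem Walk.IsCycle.isHamiltonianCycle_of_forall_mem_support {p : G.Walk v v}
    (hp : p.IsCycle) (hmem : ∀ w, w ∈ p.support) : p.IsHamiltonianCycle := by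
  refine ⟨hp, hp.isPath_tail.isHamiltonian_of_mem fun w ↦ ?_⟩
  rw [p.support_tail_of_not_nil hp.not_nil]
  rcases eq_or_ne w v with rfl | hwv
  · exact end_mem_tail_support hp.not_nil
  · simpa [← p.cons_support_tail hp.not_nil, hwv] using hmem w

theorem Walk.IsHamiltonianCycle.isCycles_of_edgeSet_eq {p : K.Walk v v}
    (hp : p.IsHamiltonianCycle) (hG : G.edgeSet = p.edgeSet) : G.IsCycles := by
  intro u _
  have : G.neighborSet u = p.toSubgraph.neighborSet u := by
    ext w
    rw [mem_neighborSet, Subgraph.mem_neighborSet, ← SimpleGraph.mem_edgeSet, hG,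
      ← Subgraph.mem_edgeSet, edgeSet_toSubgraph]
  rw [this]
  exact hp.isCycle.ncard_neighborSet_toSubgraph_eq_two (hp.mem_support u)

theorem Walk.IsHamiltonianCycle.connected_of_edgeSet_eq {p : K.Walk v v}
    (hp : p.IsHamiltonianCycle) (hG : G.edgeSet = p.edgeSet) : G.Connected := by
  let q := p.transfer G fun e he ↦ hG ▸ he
  have hreach (u : V) : G.Reachable v u :=
    (q.takeUntil u (by simpa [q] using hp.mem_support u)).reachable
  exact (connected_iff G).mpr ⟨fun u w ↦ (hreach u).symm.trans (hreach w), ⟨v⟩⟩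

theorem IsCycles.exists_isHamiltonianCycle [Finite V] (hcyc : G.IsCycles) (hconn : G.Connected)
    (hv : (G.neighborSet v).Nonempty) :
    ∃ p : G.Walk v v, p.IsHamiltonianCycle ∧ p.edgeSet = G.edgeSet := by
  classical
  have := Fintype.ofFinite V
  obtain ⟨p, hp, hverts⟩ :=
    hcyc.exists_cycle_toSubgraph_verts_eq_connectedComponentSupp (c := G.connectedComponentMk v)
      rfl hv
  have hmem_verts (w : V) : w ∈ p.toSubgraph.verts := by
    rw [hverts, ConnectedComponent.mem_supp_iff, ConnectedComponent.eq]
    exact hconn w v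
  refine ⟨p, hp.isHamiltonianCycle_of_forall_mem_support fun w ↦
    p.mem_verts_toSubgraph.mp (hmem_verts w), ?_⟩
  ext e
  induction e using Sym2.ind with
  | _ u w =>
    rw [← Walk.edgeSet_toSubgraph, Subgraph.mem_edgeSet, SimpleGraph.mem_edgeSet]
    exact hp.adj_toSubgraph_iff_of_isCycles hcyc (hmem_verts u) w

theorem exists_isHamiltonianCycle_edgeSet_eq_iff [Finite V] (hGK : G ≤ K) :
    (∃ v, ∃ p : K.Walk v v, p.IsHamiltonianCycle ∧ p.edgeSet = G.edgeSet) ↔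
      G.IsCycles ∧ G.Connected ∧ G.edgeSet.Nonempty := by
  constructor
  · rintro ⟨v, p, hp, hG⟩
    obtain ⟨e, he⟩ := List.exists_mem_of_length_pos
      (by rw [p.length_edges]; linarith [hp.isCycle.three_le_length])
    exact ⟨hp.isCycles_of_edgeSet_eq hG.symm, hp.connected_of_edgeSet_eq hG.symm, e, hG ▸ he⟩
  · rintro ⟨hcyc, hconn, ⟨e, he⟩⟩
    induction e using Sym2.ind with
    | _ u w =>
      obtain ⟨p, hp, hG⟩ := hcyc.exists_isHamiltonianCycle hconn ⟨w, he⟩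
      exact ⟨u, p.mapLe hGK, hp.map (f := Hom.ofLE hGK) Function.bijective_id,
        (p.edgeSet_mapLe_eq_edgeSet hGK).trans hG⟩

end SimpleGraph

section MatchingUnion

open Sum

variable {n : ℕ} (σ τ : Equiv.Perm (Fin n))

def matchingUnionGraph : SimpleGraph (Fin n ⊕ Fin n) :=
  fromEdgeSet (matchingEdges n σ ∪ matchingEdges n τ)

theorem edgeSet_matchingUnionGraph :
    (matchingUnionGraph σ τ).edgeSet = matchingEdges n σ ∪ matchingEdges n τ := by
  rw [matchingUnionGraph, edgeSet_fromEdgeSet, sdiff_eq_left, Set.disjoint_left]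
  rintro e (⟨m, rfl⟩ | ⟨m, rfl⟩) <;> simp

theorem edgeSet_matchingUnionGraph_nonempty_iff :
    (matchingUnionGraph σ τ).edgeSet.Nonempty ↔ Nonempty (Fin n) := by
  rw [edgeSet_matchingUnionGraph]
  constructor
  · rintro ⟨_, ⟨m, -⟩ | ⟨m, -⟩⟩ <;> exact ⟨m⟩
  · rintro ⟨m⟩
    exact ⟨_, Or.inl ⟨m, rfl⟩⟩

variable {σ τ}

@[simp]
theorem matchingUnionGraph_adj_inl_inr {a b : Fin n} :
    (matchingUnionGraph σ τ).Adj (inl a) (inr b) ↔ σ a = b ∨ τ a = b := by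
  simp [matchingUnionGraph, matchingEdges, eq_comm]

@[simp]
theorem matchingUnionGraph_adj_inr_inl {a b : Fin n} :
    (matchingUnionGraph σ τ).Adj (inr b) (inl a) ↔ σ a = b ∨ τ a = b := by
  rw [adj_comm, matchingUnionGraph_adj_inl_inr]

@[simp]
theorem not_matchingUnionGraph_adj_inl_inl {a b : Fin n} :
    ¬(matchingUnionGraph σ τ).Adj (inl a) (inl b) := by
  simp [matchingUnionGraph, matchingEdges]

@[simp]
theorem not_matchingUnionGraph_adj_inr_inr {a b : Fin n} :
    ¬(matchingUnionGraph σ τ).Adj (inr a) (inr b) := by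
  simp [matchingUnionGraph, matchingEdges]

variable (σ τ)

theorem matchingUnionGraph_le_completeBipartiteGraph :
    matchingUnionGraph σ τ ≤ completeBipartiteGraph (Fin n) (Fin n) := by
  rintro (a | b) (c | d) h <;> simp_all

theorem neighborSet_matchingUnionGraph_inl (a : Fin n) :
    (matchingUnionGraph σ τ).neighborSet (inl a) = {inr (σ a), inr (τ a)} := by
  ext (c | d) <;> simp [eq_comm]

theorem neighborSet_matchingUnionGraph_inr (b : Fin n) :
    (matchingUnionGraph σ τ).neighborSet (inr b) = {inl (σ⁻¹ b), inl (τ⁻¹ b)} := by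
  ext (c | d) <;> simp [Equiv.eq_symm_apply]

theorem isCycles_matchingUnionGraph_iff :
    (matchingUnionGraph σ τ).IsCycles ↔ ∀ a, (σ⁻¹ * τ) a ≠ a := by
  have hfix_iff (a : Fin n) : (σ⁻¹ * τ) a ≠ a ↔ σ a ≠ τ a := by
    rw [Equiv.Perm.mul_apply, Ne, Equiv.Perm.inv_eq_iff_eq, eq_comm]
  constructor
  · intro hcyc a
    rw [hfix_iff]
    intro hστ
    have h2 := hcyc (v := inl a) ⟨inr (σ a), by simp⟩
    simp [neighborSet_matchingUnionGraph_inl, hστ] at h2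
  · rintro hfix (a | b) -
    · rw [neighborSet_matchingUnionGraph_inl, Set.ncard_pair]
      simpa using (hfix_iff a).mp (hfix a)
    · rw [neighborSet_matchingUnionGraph_inr, Set.ncard_pair]
      simpa using hfix (τ⁻¹ b)

def matchedLeft : Fin n ⊕ Fin n → Fin n := Sum.elim id ⇑σ⁻¹

@[simp]
theorem matchedLeft_inl (a : Fin n) : matchedLeft σ (inl a) = a := rfl

@[simp]
theorem matchedLeft_inr (b : Fin n) : matchedLeft σ (inr b) = σ⁻¹ b := rfl

variable {σ τ} in
theorem sameCycle_matchedLeft_of_adj {u w : Fin n ⊕ Fin n}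
    (h : (matchingUnionGraph σ τ).Adj u w) :
    (σ⁻¹ * τ).SameCycle (matchedLeft σ u) (matchedLeft σ w) := by
  have key {a b : Fin n} (hb : σ a = b ∨ τ a = b) : (σ⁻¹ * τ).SameCycle a (σ⁻¹ b) := by
    rcases hb with rfl | rfl
    · simp [Equiv.Perm.SameCycle.refl]
    · exact Equiv.Perm.sameCycle_apply_right.mpr .rfl
  rcases u with a | b <;> rcases w with c | d
  · simp at h
  · exact key (by simpa using h)
  · exact (key (by simpa using h)).symm
  · simp at h

theorem matchingUnionGraph_reachable_iff {u w : Fin n ⊕ Fin n} :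
    (matchingUnionGraph σ τ).Reachable u w ↔
      (σ⁻¹ * τ).SameCycle (matchedLeft σ u) (matchedLeft σ w) := by
  constructor
  · rintro ⟨p⟩
    induction p with
    | nil => exact .rfl
    | cons h _ ih => exact (sameCycle_matchedLeft_of_adj h).trans ih
  · intro h
    have hleft (u : Fin n ⊕ Fin n) :
        (matchingUnionGraph σ τ).Reachable u (inl (matchedLeft σ u)) := by
      rcases u with a | b
      · rfl
      · exact Adj.reachable (by simp)
    have hstep (a : Fin n) : (matchingUnionGraph σ τ).Reachable (inl a) (inl ((σ⁻¹ * τ) a)) :=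
      (Adj.reachable (v := inr (τ a)) (by simp)).trans (Adj.reachable (by simp))
    have hpow (a : Fin n) (k : ℕ) :
        (matchingUnionGraph σ τ).Reachable (inl a) (inl (((σ⁻¹ * τ) ^ k) a)) := by
      induction k with
      | zero => rfl
      | succ k ih => exact ih.trans (by rw [pow_succ', Equiv.Perm.mul_apply]; exact hstep _)
    obtain ⟨k, hk⟩ := h.exists_nat_pow_eq
    exact (hleft u).trans ((hk ▸ hpow _ k).trans (hleft w).symm)

theorem connected_matchingUnionGraph_iff :
    (matchingUnionGraph σ τ).Connected ↔ Nonempty (Fin n) ∧ ∀ a b, (σ⁻¹ * τ).SameCycle a b := by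
  rw [connected_iff, Preconnected, nonempty_sum, or_self]
  simp only [matchingUnionGraph_reachable_iff]
  exact ⟨fun ⟨h, hne⟩ ↦ ⟨hne, fun a b ↦ h (inl a) (inl b)⟩,
    fun ⟨hne, h⟩ ↦ ⟨fun u w ↦ h _ _, hne⟩⟩

end MatchingUnion

theorem stmt5_general (n : ℕ) (σ τ : Equiv.Perm (Fin n)) :
    (∃ (v : Fin n ⊕ Fin n)
        (w : (completeBipartiteGraph (Fin n) (Fin n)).Walk v v),
      w.IsHamiltonianCycle ∧
        {e | e ∈ w.edges} = matchingEdges n σ ∪ matchingEdges n τ) ↔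
      ((σ⁻¹ * τ).IsCycle ∧ (σ⁻¹ * τ).support = Finset.univ) := by
  have key := exists_isHamiltonianCycle_edgeSet_eq_iff
    (matchingUnionGraph_le_completeBipartiteGraph σ τ)
  rw [edgeSet_matchingUnionGraph_nonempty_iff, isCycles_matchingUnionGraph_iff,
    connected_matchingUnionGraph_iff, edgeSet_matchingUnionGraph] at key
  rw [Equiv.Perm.isCycle_and_support_eq_univ_iff]
  exact key.trans (by tauto)

/-- For distinct permutations `σ, τ` of `Fin n` (`n ≥ 2`), the spanning subgraph of
`K_{n,n}` with edge set `M_σ ∪ M_τ` is a Hamiltonian cycle of `K_{n,n}` iff the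
permutation `σ⁻¹ ∘ τ` is a single cycle whose support is all of `Fin n`. -/
theorem stmt5 (n : ℕ) (hn : 2 ≤ n) (σ τ : Equiv.Perm (Fin n)) (hστ : σ ≠ τ) :
    (∃ (v : Fin n ⊕ Fin n)
        (w : (completeBipartiteGraph (Fin n) (Fin n)).Walk v v),
      w.IsHamiltonianCycle ∧
        {e | e ∈ w.edges} = matchingEdges n σ ∪ matchingEdges n τ) ↔
      ((σ⁻¹ * τ).IsCycle ∧ (σ⁻¹ * τ).support = Finset.univ) :=
  stmt5_general n σ τ
end

section
/- Let n ≥ 2, let σ, τ be permutations of Fin n, and let O be an orbit of the permutation σ⁻¹ ∘ τ on Fin n with |O| = ℓ ≥ 2. Then the subgraph of K_{n,n} whose edge set is {s(Sum.inl m, Sum.inr (σ m)) : m ∈ O} ∪ {s(Sum.inl m, Sum.inr (τ m)) : m ∈ O} is a cycle of length 2ℓ, in which edges of M_σ and edges of M_τ alternate. -/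
/-! Put `f = σ⁻¹ * τ`, so that `σ (f v) = τ v`. The sequence
`inl u, inr (τ u), inl (f u), inr (τ (f u)), inl (f² u), …` then alternately steps along the
`τ`-edge `s(inl v, inr (τ v))` and the `σ`-edge `s(inl (f v), inr (σ (f v)))`. The orbit of `u`
has as many points as the minimal period `ℓ` of `u` under `f`, so the sequence is
`2ℓ`-periodic and injective on its first `2ℓ` terms: for `ℓ ≥ 2` its first `2ℓ` steps form a
cycle, whose edges are exactly the `σ`- and `τ`-edges at the points of the orbit. -/

open SimpleGraph

open Function Set

theorem Function.ncard_range_iterate_of_mem_periodicPts {α : Type*} {f : α → α} {x : α}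
    (hx : x ∈ periodicPts f) : (range fun k => f^[k] x).ncard = minimalPeriod f x := by
  have hrange : (range fun k => f^[k] x) = (fun k => f^[k] x) '' Iio (minimalPeriod f x) := by
    refine (image_subset_range _ _).antisymm' ?_
    rintro _ ⟨k, rfl⟩
    exact ⟨k % minimalPeriod f x, Nat.mod_lt _ (minimalPeriod_pos_of_mem_periodicPts hx),
      iterate_mod_minimalPeriod_eq⟩
  rw [hrange, iterate_injOn_Iio_minimalPeriod.ncard_image, ncard_Iio_nat]

namespace Sum

variable {α β : Type*}

def interleave (a : ℕ → α) (b : ℕ → β) (j : ℕ) : α ⊕ β :=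
  if Even j then inl (a (j / 2)) else inr (b (j / 2))

variable {a : ℕ → α} {b : ℕ → β}

@[simp]
theorem interleave_two_mul (k : ℕ) : interleave a b (2 * k) = inl (a k) := by
  simp [interleave]

@[simp]
theorem interleave_two_mul_add_one (k : ℕ) : interleave a b (2 * k + 1) = inr (b k) := by
  simp [interleave, Nat.add_div_of_dvd_right]

theorem interleave_two_mul_add_two (k : ℕ) :
    interleave a b (2 * k + 1 + 1) = inl (a (k + 1)) := by
  rw [show 2 * k + 1 + 1 = 2 * (k + 1) by ring, interleave_two_mul]

theorem periodic_interleave {ℓ : ℕ} (ha : Periodic a ℓ) (hb : Periodic b ℓ) :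
    Periodic (interleave a b) (2 * ℓ) := by
  intro j
  obtain ⟨k, rfl | rfl⟩ := Nat.even_or_odd' j
  · rw [← mul_add, interleave_two_mul, interleave_two_mul, ha]
  · rw [add_right_comm, ← mul_add, interleave_two_mul_add_one, interleave_two_mul_add_one, hb]

theorem injOn_interleave {ℓ : ℕ} (ha : InjOn a (Iio ℓ)) (hb : InjOn b (Iio ℓ)) :
    InjOn (interleave a b) (Iio (2 * ℓ)) := by
  intro i hi j hj hij
  simp only [mem_Iio] at hi hj
  obtain ⟨k, rfl | rfl⟩ := Nat.even_or_odd' i <;>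
    obtain ⟨k', rfl | rfl⟩ := Nat.even_or_odd' j
  all_goals simp only [interleave_two_mul, interleave_two_mul_add_one, inl.injEq, inr.injEq,
    reduceCtorEq] at hij
  · rw [ha (by simp; omega) (by simp; omega) hij]
  · rw [hb (by simp; omega) (by simp; omega) hij]

end Sum

theorem SimpleGraph.completeBipartiteGraph_adj_interleave {α β : Type*} {a : ℕ → α}
    {b : ℕ → β} (j : ℕ) :
    (completeBipartiteGraph α β).Adj (Sum.interleave a b j) (Sum.interleave a b (j + 1)) := by
  obtain ⟨k, rfl | rfl⟩ := Nat.even_or_odd' j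
  · simp
  · simp [Sum.interleave_two_mul_add_two]

namespace SimpleGraph.Walk

variable {V : Type*} {G : SimpleGraph V}

def ofSeq (x : ℕ → V) (hx : ∀ i, G.Adj (x i) (x (i + 1))) : (m : ℕ) → G.Walk (x 0) (x m)
  | 0 => nil
  | m + 1 => (ofSeq x hx m).concat (hx m)

variable {x : ℕ → V} (hx : ∀ i, G.Adj (x i) (x (i + 1)))

@[simp]
theorem length_ofSeq (m : ℕ) : (ofSeq x hx m).length = m := by
  induction m with
  | zero => rfl
  | succ m ih => rw [ofSeq, length_concat, ih]

theorem support_ofSeq (m : ℕ) : (ofSeq x hx m).support = (List.range (m + 1)).map x := by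
  induction m with
  | zero => rfl
  | succ m ih => rw [ofSeq, support_concat, ih, List.range_succ (n := m + 1), List.map_append]; rfl

theorem edges_ofSeq (m : ℕ) :
    (ofSeq x hx m).edges = (List.range m).map fun i => s(x i, x (i + 1)) := by
  induction m with
  | zero => rfl
  | succ m ih => simp [ofSeq, ih, List.range_succ]

theorem getElem_edges_ofSeq (m i : ℕ) (hi : i < (ofSeq x hx m).edges.length) :
    (ofSeq x hx m).edges[i] = s(x i, x (i + 1)) := by
  simp [edges_ofSeq]

variable {m : ℕ}

theorem isCycle_ofSeq (hper : Periodic x m) (hm : 3 ≤ m) (hinj : InjOn x (Iio m)) :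
    ((ofSeq x hx m).copy rfl hper.eq).IsCycle := by
  have hnil : ¬ ((ofSeq x hx m).copy rfl hper.eq).Nil := by
    rw [not_nil_iff_lt_length, length_copy, length_ofSeq]; omega
  rw [isCycle_iff_isPath_tail_and_le_length, isPath_def, support_tail_of_not_nil _ hnil,
    support_copy, length_copy, support_ofSeq, List.range_succ_eq_map, List.map_cons,
    List.tail_cons, List.map_map, length_ofSeq]
  refine ⟨List.nodup_range.map_on fun i hi j hj hij => ?_, hm⟩
  have hm0 : 0 < m := by omega
  rw [comp_apply, comp_apply, ← hper.map_mod_nat (i + 1), ← hper.map_mod_nat (j + 1)] at hij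
  have hmod : i + 1 ≡ j + 1 [MOD m] :=
    hinj (Nat.mod_lt _ hm0) (Nat.mod_lt _ hm0) hij
  exact (Nat.ModEq.add_right_cancel' 1 hmod).eq_of_lt_of_lt (List.mem_range.mp hi)
    (List.mem_range.mp hj)

theorem setOf_mem_edges_ofSeq (hper : Periodic x m) (hm : 0 < m) :
    {e | e ∈ (ofSeq x hx m).edges} = range fun i => s(x i, x (i + 1)) := by
  have hedge : Periodic (fun i => s(x i, x (i + 1))) m := fun i => by
    simp only [hper i, add_right_comm i m 1, hper (i + 1)]
  ext e
  simp only [edges_ofSeq, List.mem_map, List.mem_range, mem_ofPred_eq, mem_range]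
  constructor
  · rintro ⟨i, -, rfl⟩
    exact ⟨i, rfl⟩
  · rintro ⟨i, rfl⟩
    exact ⟨i % m, Nat.mod_lt _ hm, hedge.map_mod_nat i⟩

end SimpleGraph.Walk

section OrbitSeq

open Sum

variable {α : Type*} (σ τ : Equiv.Perm α) (u : α)

def orbitSeq : ℕ → α ⊕ α :=
  interleave (fun k => (⇑(σ⁻¹ * τ))^[k] u) (fun k => τ ((⇑(σ⁻¹ * τ))^[k] u))

theorem apply_iterate_succ_inv_mul (k : ℕ) :
    σ ((⇑(σ⁻¹ * τ))^[k + 1] u) = τ ((⇑(σ⁻¹ * τ))^[k] u) := by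
  rw [iterate_succ_apply', Equiv.Perm.mul_apply, Equiv.Perm.coe_inv, Equiv.apply_symm_apply]

theorem orbitSeq_edge_two_mul (k : ℕ) :
    s(orbitSeq σ τ u (2 * k), orbitSeq σ τ u (2 * k + 1)) =
      s(inl ((⇑(σ⁻¹ * τ))^[k] u), inr (τ ((⇑(σ⁻¹ * τ))^[k] u))) := by
  simp [orbitSeq]

theorem orbitSeq_edge_two_mul_add_one (k : ℕ) :
    s(orbitSeq σ τ u (2 * k + 1), orbitSeq σ τ u (2 * k + 1 + 1)) =
      s(inl ((⇑(σ⁻¹ * τ))^[k + 1] u), inr (σ ((⇑(σ⁻¹ * τ))^[k + 1] u))) := by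
  rw [orbitSeq, interleave_two_mul_add_one, interleave_two_mul_add_two,
    apply_iterate_succ_inv_mul, Sym2.eq_swap]

theorem completeBipartiteGraph_adj_orbitSeq (i : ℕ) :
    (completeBipartiteGraph α α).Adj (orbitSeq σ τ u i) (orbitSeq σ τ u (i + 1)) :=
  completeBipartiteGraph_adj_interleave i

variable {σ τ u}

theorem periodic_orbitSeq :
    Periodic (orbitSeq σ τ u) (2 * minimalPeriod (σ⁻¹ * τ) u) :=
  have hiter : Periodic (fun k => (⇑(σ⁻¹ * τ))^[k] u) (minimalPeriod (σ⁻¹ * τ) u) :=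
    fun _ => iterate_add_minimalPeriod_eq
  periodic_interleave hiter fun k => congrArg τ (hiter k)

theorem injOn_orbitSeq : InjOn (orbitSeq σ τ u) (Iio (2 * minimalPeriod (σ⁻¹ * τ) u)) :=
  injOn_interleave iterate_injOn_Iio_minimalPeriod
    (τ.injective.comp_injOn iterate_injOn_Iio_minimalPeriod)

theorem range_orbitSeq_edge (hu : u ∈ periodicPts (σ⁻¹ * τ)) :
    (range fun i => s(orbitSeq σ τ u i, orbitSeq σ τ u (i + 1))) =
      {e | ∃ m ∈ range fun k => (⇑(σ⁻¹ * τ))^[k] u, e = s(inl m, inr (σ m))} ∪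
        {e | ∃ m ∈ range fun k => (⇑(σ⁻¹ * τ))^[k] u, e = s(inl m, inr (τ m))} := by
  ext e
  simp only [mem_range, mem_union, mem_ofPred_eq]
  constructor
  · rintro ⟨i, rfl⟩
    obtain ⟨k, rfl | rfl⟩ := Nat.even_or_odd' i
    · exact .inr ⟨_, ⟨k, rfl⟩, orbitSeq_edge_two_mul σ τ u k⟩
    · exact .inl ⟨_, ⟨k + 1, rfl⟩, orbitSeq_edge_two_mul_add_one σ τ u k⟩
  · rintro (⟨_, ⟨k, rfl⟩, rfl⟩ | ⟨_, ⟨k, rfl⟩, rfl⟩)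
    · -- `f^[k] u = f^[(k + p - 1) + 1] u` for the period `p > 0`
      have hp := minimalPeriod_pos_of_mem_periodicPts hu
      refine ⟨2 * (k + minimalPeriod (σ⁻¹ * τ) u - 1) + 1, ?_⟩
      rw [orbitSeq_edge_two_mul_add_one, Nat.sub_add_cancel (by omega),
        iterate_add_minimalPeriod_eq]
    · exact ⟨2 * k, orbitSeq_edge_two_mul σ τ u k⟩

end OrbitSeq

section Matchings

variable {n : ℕ} (σ τ : Equiv.Perm (Fin n)) (u : Fin n) {i : ℕ}

theorem orbitSeq_edge_mem_matchingEdges_of_even (hi : Even i) :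
    s(orbitSeq σ τ u i, orbitSeq σ τ u (i + 1)) ∈ matchingEdges n τ := by
  obtain ⟨k, rfl⟩ := hi
  exact ⟨_, by rw [← two_mul, orbitSeq_edge_two_mul]⟩

theorem orbitSeq_edge_mem_matchingEdges_of_odd (hi : Odd i) :
    s(orbitSeq σ τ u i, orbitSeq σ τ u (i + 1)) ∈ matchingEdges n σ := by
  obtain ⟨k, rfl⟩ := hi
  exact ⟨_, orbitSeq_edge_two_mul_add_one σ τ u k⟩

end Matchings

theorem stmt6_general (n : ℕ) (σ τ : Equiv.Perm (Fin n))
    (O : Set (Fin n)) (u : Fin n)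
    (hO : O = {v | ∃ k : ℕ, ((σ⁻¹ * τ) ^ k) u = v})
    (ℓ : ℕ) (hℓ : 2 ≤ ℓ) (hcard : O.ncard = ℓ) :
    ∃ (v : Fin n ⊕ Fin n)
        (w : (completeBipartiteGraph (Fin n) (Fin n)).Walk v v),
      w.IsCycle ∧ w.length = 2 * ℓ ∧
      {e | e ∈ w.edges} =
        ({e | ∃ m ∈ O, e = s(Sum.inl m, Sum.inr (σ m))} ∪
          {e | ∃ m ∈ O, e = s(Sum.inl m, Sum.inr (τ m))}) ∧
      ∀ (i : ℕ) (h1 : i < w.edges.length) (h2 : i + 1 < w.edges.length),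
        (w.edges.get ⟨i, h1⟩ ∈ matchingEdges n σ ∧
            w.edges.get ⟨i + 1, h2⟩ ∈ matchingEdges n τ) ∨
        (w.edges.get ⟨i, h1⟩ ∈ matchingEdges n τ ∧
            w.edges.get ⟨i + 1, h2⟩ ∈ matchingEdges n σ) := by
  have hu : u ∈ periodicPts (σ⁻¹ * τ) := (σ⁻¹ * τ).injective.mem_periodicPts u
  have hO' : O = range fun k => (⇑(σ⁻¹ * τ))^[k] u := by
    simp only [hO, Equiv.Perm.coe_pow]; rfl
  obtain rfl : minimalPeriod (σ⁻¹ * τ) u = ℓ := by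
    rw [← hcard, hO', ncard_range_iterate_of_mem_periodicPts hu]
  subst hO'
  have hadj := completeBipartiteGraph_adj_orbitSeq σ τ u
  refine ⟨_, (Walk.ofSeq (orbitSeq σ τ u) hadj _).copy rfl periodic_orbitSeq.eq,
    Walk.isCycle_ofSeq hadj periodic_orbitSeq (by omega) injOn_orbitSeq,
    by rw [Walk.length_copy, Walk.length_ofSeq], ?_, ?_⟩
  · rw [Walk.edges_copy, Walk.setOf_mem_edges_ofSeq hadj periodic_orbitSeq (by omega),
      range_orbitSeq_edge hu]
  · intro i h1 h2
    simp only [List.get_eq_getElem, Walk.edges_copy, Walk.getElem_edges_ofSeq]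
    rcases Nat.even_or_odd i with hi | hi
    · exact .inr ⟨orbitSeq_edge_mem_matchingEdges_of_even σ τ u hi,
        orbitSeq_edge_mem_matchingEdges_of_odd σ τ u hi.add_one⟩
    · exact .inl ⟨orbitSeq_edge_mem_matchingEdges_of_odd σ τ u hi,
        orbitSeq_edge_mem_matchingEdges_of_even σ τ u hi.add_one⟩

/-- If `O` is an orbit of `σ⁻¹ ∘ τ` on `Fin n` of size `ℓ ≥ 2`, then the subgraph of
`K_{n,n}` with edge set `{s(inl m, inr (σ m)) : m ∈ O} ∪ {s(inl m, inr (τ m)) : m ∈ O}`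
is a cycle of length `2ℓ` in which edges of `M_σ` and edges of `M_τ` alternate. -/
theorem stmt6 (n : ℕ) (hn : 2 ≤ n) (σ τ : Equiv.Perm (Fin n))
    (O : Set (Fin n)) (u : Fin n)
    (hO : O = {v | ∃ k : ℕ, ((σ⁻¹ * τ) ^ k) u = v})
    (ℓ : ℕ) (hℓ : 2 ≤ ℓ) (hcard : O.ncard = ℓ) :
    ∃ (v : Fin n ⊕ Fin n)
        (w : (completeBipartiteGraph (Fin n) (Fin n)).Walk v v),
      w.IsCycle ∧ w.length = 2 * ℓ ∧
      {e | e ∈ w.edges} =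
        ({e | ∃ m ∈ O, e = s(Sum.inl m, Sum.inr (σ m))} ∪
          {e | ∃ m ∈ O, e = s(Sum.inl m, Sum.inr (τ m))}) ∧
      ∀ (i : ℕ) (h1 : i < w.edges.length) (h2 : i + 1 < w.edges.length),
        (w.edges.get ⟨i, h1⟩ ∈ matchingEdges n σ ∧
            w.edges.get ⟨i + 1, h2⟩ ∈ matchingEdges n τ) ∨
        (w.edges.get ⟨i, h1⟩ ∈ matchingEdges n τ ∧
            w.edges.get ⟨i + 1, h2⟩ ∈ matchingEdges n σ) :=
  stmt6_general n σ τ O u hO ℓ hℓ hcard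
end

section
/- Let p be an odd prime. Each map π_{(a,b)} is a bijection of ZMod p × ZMod p, and the family {π_{(a,b)} : (a,b) ∈ ZMod p × ZMod p} yields a 1-factorization of K_{p²,p²}: for every pair of points (c,d), (c',d') ∈ ZMod p × ZMod p there exists exactly one pair (a,b) ∈ ZMod p × ZMod p such that π_{(a,b)}(c,d) = (c',d'). -/
/-- The map `π_{(a,b)}` on `ZMod p × ZMod p` (with `x` a fixed primitive root mod `p`). -/
def piab {p : ℕ} (x a b : ZMod p) : ZMod p × ZMod p → ZMod p × ZMod p :=
  fun cd =>
    if cd.1 = 0 then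
      if a + b + cd.2 ≠ 0 then (a, a + b + cd.2) else (a + x * b, 0)
    else
      if b + cd.2 = 0 then (a + cd.1 + x * b, 0) else (a + cd.1, b + cd.2)

/-- The composite `π⁻¹ ∘ π_{(a,b)}`, where `π(c,d) = (x⁻¹·c, x·d)`,
so `π⁻¹(c,d) = (x·c, x⁻¹·d)`. -/
def piInvPiab {p : ℕ} (x a b : ZMod p) : ZMod p × ZMod p → ZMod p × ZMod p :=
  fun cd => (x * (piab x a b cd).1, x⁻¹ * (piab x a b cd).2)

/-- The orbit of `u` under `f`: the set `{fᵏ(u) : k ∈ ℕ}`. -/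
def orbit {α : Type*} (f : α → α) (u : α) : Set α :=
  {v | ∃ k : ℕ, f^[k] u = v}

/-- The set `𝓘⁽²⁾ = {(0,1), (1,0)} ∪ {(z,z) : z ≠ 0} ∪ {(z, z·x) : z ≠ 0}`. -/
def I2 (p : ℕ) (x : ZMod p) : Set (ZMod p × ZMod p) :=
  {q | q = (0, 1) ∨ q = (1, 0) ∨ (q.1 ≠ 0 ∧ q.2 = q.1) ∨ (q.1 ≠ 0 ∧ q.2 = q.1 * x)}

/-- Explicit inverse of `piab`. -/
def piabInv {p : ℕ} (x a b : ZMod p) : ZMod p × ZMod p → ZMod p × ZMod p :=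
  fun cd =>
    if cd.2 ≠ 0 then
      if cd.1 = a then (0, cd.2 - a - b) else (cd.1 - a, cd.2 - b)
    else
      if cd.1 = a + x * b then (0, -a - b) else (cd.1 - a - x * b, -b)

lemma piab_leftInv {p : ℕ} (x a b : ZMod p) :
    Function.LeftInverse (piabInv x a b) (piab x a b) := by
  rintro ⟨c, d⟩
  by_cases hc : c = 0
  · subst hc
    by_cases h1 : a + b + d = 0
    · have him : piab x a b (0, d) = (a + x * b, 0) := by simp [piab, h1]
      rw [him]
      simp only [piabInv]
      norm_num
      linear_combination -h1
    · have him : piab x a b (0, d) = (a, a + b + d) := by simp [piab, h1]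
      rw [him]
      simp only [piabInv]
      simp [h1]
      ring
  · by_cases h2 : b + d = 0
    · have him : piab x a b (c, d) = (a + c + x * b, 0) := by simp [piab, hc, h2]
      rw [him]
      simp only [piabInv]
      norm_num
      rw [if_neg (by intro h; exact hc (by linear_combination h))]
      rw [Prod.mk.injEq]
      exact ⟨by ring, by linear_combination -h2⟩
    · have him : piab x a b (c, d) = (a + c, b + d) := by simp [piab, hc, h2]
      rw [him]
      simp only [piabInv]
      rw [if_pos (by simpa using h2), if_neg (by intro h; exact hc (by linear_combination h))]
      rw [Prod.mk.injEq]
      exact ⟨by ring, by ring⟩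

lemma piab_rightInv {p : ℕ} (x a b : ZMod p) :
    Function.RightInverse (piabInv x a b) (piab x a b) := by
  rintro ⟨c, d⟩
  by_cases hd : d = 0
  · subst hd
    by_cases h1 : c = a + x * b
    · have him : piabInv x a b (c, 0) = (0, -a - b) := by simp [piabInv, h1]
      rw [him]
      simp only [piab]
      norm_num
      exact h1.symm
    · have him : piabInv x a b (c, 0) = (c - a - x * b, -b) := by simp [piabInv, h1]
      rw [him]
      simp only [piab]
      rw [if_neg (by intro h; exact h1 (by linear_combination h)), if_pos (by ring)]
      rw [Prod.mk.injEq]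
      exact ⟨by ring, rfl⟩
  · by_cases h1 : c = a
    · have him : piabInv x a b (c, d) = (0, d - a - b) := by simp [piabInv, hd, h1]
      rw [him]
      simp only [piab]
      rw [if_pos trivial, if_pos (show a + b + (d - a - b) ≠ 0 from
        fun h => hd (by linear_combination h))]
      rw [Prod.mk.injEq]
      exact ⟨h1.symm, by ring⟩
    · have him : piabInv x a b (c, d) = (c - a, d - b) := by simp [piabInv, hd, h1]
      rw [him]
      simp only [piab]
      rw [if_neg (by intro h; exact h1 (by linear_combination h)),
        if_neg (by intro h; exact hd (by linear_combination h))]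
      rw [Prod.mk.injEq]
      exact ⟨by ring, by ring⟩

/-- Each `π_{(a,b)}` is a bijection of `ZMod p × ZMod p`, and the family
`{π_{(a,b)}}` is a 1-factorization: for every pair of points `(c,d)`, `(c',d')`
there is exactly one `(a,b)` with `π_{(a,b)}(c,d) = (c',d')`. -/
theorem stmt8 (p : ℕ) (hp : p.Prime) (hodd : Odd p) (x : ZMod p)
    (hx : ∀ z : ZMod p, z ≠ 0 → ∃ k : ℕ, x ^ k = z) :
    (∀ a b : ZMod p, Function.Bijective (piab x a b)) ∧
    (∀ cd c'd' : ZMod p × ZMod p,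
      ∃! ab : ZMod p × ZMod p, piab x ab.1 ab.2 cd = c'd') := by
  haveI : Fact p.Prime := ⟨hp⟩
  have hp2 : p ≠ 2 := by
    rintro rfl
    exact (Nat.not_odd_iff_even.mpr (by norm_num)) hodd
  have h2 : (2 : ZMod p) ≠ 0 := by
    intro h0
    have hdvd : p ∣ 2 := by
      have : ((2 : ℕ) : ZMod p) = 0 := by exact_mod_cast h0
      exact (ZMod.natCast_eq_zero_iff 2 p).mp this
    have := (Nat.prime_dvd_prime_iff_eq hp Nat.prime_two).mp hdvd
    exact hp2 this
  have hx1 : x ≠ 1 := by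
    intro h
    obtain ⟨k, hk⟩ := hx 2 h2
    rw [h, one_pow] at hk
    have : (1 : ZMod p) = 0 := by linear_combination -hk
    exact one_ne_zero this
  have h1x : (1 : ZMod p) - x ≠ 0 := sub_ne_zero.mpr (Ne.symm hx1)
  constructor
  · intro a b
    exact Function.bijective_iff_has_inverse.mpr
      ⟨piabInv x a b, piab_leftInv x a b, piab_rightInv x a b⟩
  · rintro ⟨c, d⟩ ⟨c', d'⟩
    by_cases hc : c = 0
    · subst hc
      by_cases hd' : d' = 0
      · subst hd'
        set a0 : ZMod p := (c' + x * d) * (1 - x)⁻¹ with ha0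
        have key : a0 * (1 - x) = c' + x * d := by
          rw [ha0, mul_assoc, inv_mul_cancel₀ h1x, mul_one]
        refine ⟨(a0, -a0 - d), ?_, ?_⟩
        · simp only [piab]
          rw [if_pos trivial, if_neg (by push_neg; ring)]
          rw [Prod.mk.injEq]
          exact ⟨by linear_combination key, rfl⟩
        · rintro ⟨a, b⟩ hab
          simp only [piab] at hab
          rw [if_pos trivial] at hab
          split_ifs at hab with h
          · rw [Prod.mk.injEq] at hab
            exact absurd hab.2 h
          · push_neg at h
            rw [Prod.mk.injEq] at hab
            have ha : a = a0 := by
              rw [ha0, eq_mul_inv_iff_mul_eq₀ h1x]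
              linear_combination hab.1 - x * h
            rw [Prod.mk.injEq]
            exact ⟨ha, by linear_combination h - ha⟩
      · refine ⟨(c', d' - c' - d), ?_, ?_⟩
        · simp only [piab]
          rw [if_pos trivial,
            if_pos (show c' + (d' - c' - d) + d ≠ 0 from fun h => hd' (by linear_combination h))]
          rw [Prod.mk.injEq]
          exact ⟨rfl, by ring⟩
        · rintro ⟨a, b⟩ hab
          simp only [piab] at hab
          rw [if_pos trivial] at hab
          split_ifs at hab with h
          · rw [Prod.mk.injEq] at hab
            rw [Prod.mk.injEq]
            exact ⟨hab.1, by linear_combination hab.2 - hab.1⟩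
          · rw [Prod.mk.injEq] at hab
            exact absurd hab.2.symm hd'
    · by_cases hd' : d' = 0
      · subst hd'
        refine ⟨(c' - c + x * d, -d), ?_, ?_⟩
        · simp only [piab]
          rw [if_neg hc, if_pos (by ring)]
          rw [Prod.mk.injEq]
          exact ⟨by ring, rfl⟩
        · rintro ⟨a, b⟩ hab
          simp only [piab] at hab
          rw [if_neg hc] at hab
          split_ifs at hab with h
          · rw [Prod.mk.injEq] at hab
            rw [Prod.mk.injEq]
            refine ⟨by linear_combination hab.1 - x * h, by linear_combination h⟩
          · rw [Prod.mk.injEq] at hab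
            exact absurd hab.2 h
      · refine ⟨(c' - c, d' - d), ?_, ?_⟩
        · simp only [piab]
          rw [if_neg hc,
            if_neg (show ¬(d' - d + d = 0) from fun h => hd' (by linear_combination h))]
          rw [Prod.mk.injEq]
          exact ⟨by ring, by ring⟩
        · rintro ⟨a, b⟩ hab
          simp only [piab] at hab
          rw [if_neg hc] at hab
          split_ifs at hab with h
          · rw [Prod.mk.injEq] at hab
            exact absurd hab.2.symm hd'
          · rw [Prod.mk.injEq] at hab
            rw [Prod.mk.injEq]
            exact ⟨by linear_combination hab.1, by linear_combination hab.2⟩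
end

section
/- Let p be an odd prime. For every (a,b) ∈ ZMod p × ZMod p, the equation π_{(a,b)}(c,d) = π(c,d) has exactly one solution, namely (c,d) = (a·(y−1)⁻¹, b·(x−1)⁻¹); equivalently, the permutation π⁻¹ ∘ π_{(a,b)} of ZMod p × ZMod p has exactly one fixed point, namely (a·(y−1)⁻¹, b·(x−1)⁻¹). -/
/-- For every `(a,b)`, the equation `π_{(a,b)}(c,d) = π(c,d)` (with `π(c,d) = (y·c, x·d)`,
`y = x⁻¹`) has the unique solution `(c,d) = (a·(y−1)⁻¹, b·(x−1)⁻¹)`; equivalently,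
`π⁻¹ ∘ π_{(a,b)}` has exactly this one fixed point. -/
theorem stmt9 (p : ℕ) (hp : p.Prime) (hodd : Odd p) (x : ZMod p)
    (hx : ∀ z : ZMod p, z ≠ 0 → ∃ k : ℕ, x ^ k = z) :
    (∀ (a b : ZMod p) (cd : ZMod p × ZMod p),
      piab x a b cd = (x⁻¹ * cd.1, x * cd.2) ↔
        cd = (a * (x⁻¹ - 1)⁻¹, b * (x - 1)⁻¹)) ∧
    (∀ (a b : ZMod p) (cd : ZMod p × ZMod p),
      piInvPiab x a b cd = cd ↔ cd = (a * (x⁻¹ - 1)⁻¹, b * (x - 1)⁻¹)) := by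
  haveI : Fact p.Prime := ⟨hp⟩
  have hp2 : p ≠ 2 := by rintro rfl; exact (by decide : ¬ Odd 2) hodd
  have h2 : (2 : ZMod p) ≠ 0 := by
    intro h
    have h' : ((2 : ℕ) : ZMod p) = 0 := by push_cast; exact h
    rw [ZMod.natCast_eq_zero_iff] at h'
    exact hp2 ((Nat.prime_dvd_prime_iff_eq hp Nat.prime_two).mp h')
  have hm1 : (-1 : ZMod p) ≠ 0 := by
    intro h; exact one_ne_zero (α := ZMod p) (by linear_combination -h)
  have hx0 : x ≠ 0 := by
    rintro rfl
    obtain ⟨k, hk⟩ := hx (-1) hm1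
    rcases k with _ | n
    · rw [pow_zero] at hk; exact h2 (by linear_combination hk)
    · rw [pow_succ, mul_zero] at hk; exact hm1 hk.symm
  have hx1 : x ≠ 1 := by
    rintro rfl
    obtain ⟨k, hk⟩ := hx 2 h2
    rw [one_pow] at hk
    exact one_ne_zero (α := ZMod p) (by linear_combination -hk)
  have hs : x - 1 ≠ 0 := sub_ne_zero.mpr hx1
  have hxi0 : x⁻¹ ≠ 0 := inv_ne_zero hx0
  have hxi1 : x⁻¹ ≠ 1 := by
    intro h
    apply hx1
    have := congrArg (fun z => x * z) h
    simpa [mul_inv_cancel₀ hx0] using this.symm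
  have hsi : x⁻¹ - 1 ≠ 0 := sub_ne_zero.mpr hxi1
  have k1 : (x - 1) * (x - 1)⁻¹ = 1 := mul_inv_cancel₀ hs
  have k2 : (x⁻¹ - 1) * (x⁻¹ - 1)⁻¹ = 1 := mul_inv_cancel₀ hsi
  have k3 : x * x⁻¹ = 1 := mul_inv_cancel₀ hx0
  have main : ∀ (a b : ZMod p) (cd : ZMod p × ZMod p),
      piab x a b cd = (x⁻¹ * cd.1, x * cd.2) ↔
        cd = (a * (x⁻¹ - 1)⁻¹, b * (x - 1)⁻¹) := by
    rintro a b ⟨c, d⟩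
    by_cases hc : c = 0
    · subst hc
      by_cases h : a + b + d = 0
      · have e : piab x a b (0, d) = (a + x * b, 0) := by simp [piab, h]
        rw [e]
        simp only [Prod.ext_iff, Prod.mk.injEq]
        constructor
        · rintro ⟨h1, h2⟩
          have hd : d = 0 := by
            rcases mul_eq_zero.mp h2.symm with h' | h'
            · exact absurd h' hx0
            · exact h'
          subst hd
          have hb : b = 0 := by
            have hb' : b * (x - 1) = 0 := by linear_combination h1 - h
            exact (mul_eq_zero.mp hb').resolve_right hs
          subst hb
          have ha : a = 0 := by linear_combination h
          subst ha
          constructor <;> simp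
        · rintro ⟨h1, h2⟩
          have ha : a = 0 := by
            rcases mul_eq_zero.mp h1.symm with h' | h'
            · exact h'
            · exact absurd h' (inv_ne_zero hsi)
          subst ha
          subst h2
          have hb : b = 0 := by
            have hbx : b * x * (x - 1)⁻¹ = 0 := by linear_combination h + b * k1
            rcases mul_eq_zero.mp hbx with h' | h'
            · exact (mul_eq_zero.mp h').resolve_right hx0
            · exact absurd h' (inv_ne_zero hs)
          subst hb
          constructor <;> simp
      · have e : piab x a b (0, d) = (a, a + b + d) := by simp [piab, h]
        rw [e]
        simp only [Prod.ext_iff, Prod.mk.injEq]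
        constructor
        · rintro ⟨h1, h2⟩
          have ha : a = 0 := by simpa using h1
          subst ha
          exact ⟨by simp, by linear_combination (-(x - 1)⁻¹) * h2 - d * k1⟩
        · rintro ⟨h1, h2⟩
          have ha : a = 0 := by
            rcases mul_eq_zero.mp h1.symm with h' | h'
            · exact h'
            · exact absurd h' (inv_ne_zero hsi)
          subst ha
          subst h2
          exact ⟨by simp, by linear_combination (-b) * k1⟩
    · by_cases h : b + d = 0
      · have e : piab x a b (c, d) = (a + c + x * b, 0) := by simp [piab, hc, h]
        rw [e]
        simp only [Prod.ext_iff, Prod.mk.injEq]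
        constructor
        · rintro ⟨h1, h2⟩
          have hd : d = 0 := by
            rcases mul_eq_zero.mp h2.symm with h' | h'
            · exact absurd h' hx0
            · exact h'
          subst hd
          have hb : b = 0 := by linear_combination h
          subst hb
          refine ⟨by linear_combination (-(x⁻¹ - 1)⁻¹) * h1 - c * k2, by simp⟩
        · rintro ⟨h1, h2⟩
          subst h2
          have hb : b = 0 := by
            have hbx : b * x * (x - 1)⁻¹ = 0 := by linear_combination h + b * k1
            rcases mul_eq_zero.mp hbx with h' | h'
            · exact (mul_eq_zero.mp h').resolve_right hx0
            · exact absurd h' (inv_ne_zero hs)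
          subst hb
          subst h1
          refine ⟨by linear_combination (-a) * k2, by simp⟩
      · have e : piab x a b (c, d) = (a + c, b + d) := by simp [piab, hc, h]
        rw [e]
        simp only [Prod.ext_iff, Prod.mk.injEq]
        constructor
        · rintro ⟨h1, h2⟩
          exact ⟨by linear_combination (-(x⁻¹ - 1)⁻¹) * h1 - c * k2,
            by linear_combination (-(x - 1)⁻¹) * h2 - d * k1⟩
        · rintro ⟨h1, h2⟩
          subst h1; subst h2
          exact ⟨by linear_combination (-a) * k2, by linear_combination (-b) * k1⟩
  refine ⟨main, fun a b cd => ?_⟩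
  rw [← main a b cd]
  unfold piInvPiab
  rw [Prod.ext_iff, Prod.ext_iff]
  constructor
  · rintro ⟨h1, h2⟩
    exact ⟨by linear_combination x⁻¹ * h1 - (piab x a b cd).1 * k3,
      by linear_combination x * h2 - (piab x a b cd).2 * k3⟩
  · rintro ⟨h1, h2⟩
    exact ⟨by linear_combination x * h1 + cd.1 * k3,
      by linear_combination x⁻¹ * h2 + cd.2 * k3⟩
end

section
/- Let p be an odd prime and let (a,b) ∈ ZMod p × ZMod p. Define maps on ZMod p × ZMod p by: π⁰_{(a,b)}(c,d) = (x·(a+c), y·(b+d)); π¹_{(a,b)}(c,d) = (c, y·a + d) if c = x·a and (c,d) otherwise; π²_{(a,b)}(c,d) = (c + x²·b, d) if d = 0 and (c,d) otherwise. Then π⁻¹ ∘ π_{(a,b)} = π²_{(a,b)} ∘ π¹_{(a,b)} ∘ π⁰_{(a,b)}. -/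
/-- The decomposition `π⁻¹ ∘ π_{(a,b)} = π²_{(a,b)} ∘ π¹_{(a,b)} ∘ π⁰_{(a,b)}`, where
`π⁰_{(a,b)}(c,d) = (x·(a+c), y·(b+d))`, `π¹_{(a,b)}(c,d) = (c, y·a+d)` if `c = x·a`
(identity elsewhere), and `π²_{(a,b)}(c,d) = (c + x²·b, d)` if `d = 0` (identity
elsewhere), with `y = x⁻¹`. -/
theorem stmt10 (p : ℕ) (hp : p.Prime) (hodd : Odd p) (x : ZMod p)
    (hx : ∀ z : ZMod p, z ≠ 0 → ∃ k : ℕ, x ^ k = z) (a b : ZMod p) :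
    piInvPiab x a b =
      (fun cd : ZMod p × ZMod p => if cd.2 = 0 then (cd.1 + x ^ 2 * b, cd.2) else cd) ∘
      (fun cd : ZMod p × ZMod p => if cd.1 = x * a then (cd.1, x⁻¹ * a + cd.2) else cd) ∘
      (fun cd : ZMod p × ZMod p => (x * (a + cd.1), x⁻¹ * (b + cd.2))) := by
  haveI : Fact p.Prime := ⟨hp⟩
  have hp2 : p ≠ 2 := by rintro rfl; exact (Nat.not_odd_iff_even.mpr (by norm_num)) hodd
  have hx0 : x ≠ 0 := by
    rintro rfl
    obtain ⟨k, hk⟩ := hx (-1) (by simp only [ne_eq, neg_eq_zero]; exact one_ne_zero)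
    rcases Nat.eq_zero_or_pos k with rfl | hk'
    · simp only [pow_zero] at hk
      have h2 : ((2 : ℕ) : ZMod p) = 0 := by push_cast; linear_combination hk
      have := (ZMod.natCast_eq_zero_iff 2 p).mp h2
      exact hp2 ((Nat.prime_dvd_prime_iff_eq hp Nat.prime_two).mp this)
    · rw [zero_pow hk'.ne'] at hk
      exact one_ne_zero (neg_eq_zero.mp hk.symm)
  have hxi : x⁻¹ * x = 1 := inv_mul_cancel₀ hx0
  funext cd
  obtain ⟨c, d⟩ := cd
  simp only [piInvPiab, piab, Function.comp_apply]
  by_cases hc : c = 0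
  · subst hc
    have h1 : x * (a + 0) = x * a := by ring
    simp only [h1, if_pos rfl, if_true]
    by_cases h2 : a + b + d = 0
    · have h3 : x⁻¹ * a + x⁻¹ * (b + d) = 0 := by
        have h4 : x⁻¹ * (a + b + d) = 0 := by rw [h2, mul_zero]
        linear_combination h4
      simp only [if_neg (not_not.mpr h2), h3, if_pos rfl, if_true, Prod.mk.injEq]
      exact ⟨by ring, by simp⟩
    · have h3 : x⁻¹ * a + x⁻¹ * (b + d) ≠ 0 := by
        intro h
        apply h2
        have h5 : x * (x⁻¹ * a + x⁻¹ * (b + d)) = 0 := by rw [h, mul_zero]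
        calc a + b + d = x * (x⁻¹ * a + x⁻¹ * (b + d)) := by field_simp; ring
          _ = 0 := h5
      simp only [if_pos h2, if_neg h3, if_true, Prod.mk.injEq]
      exact ⟨trivial, by ring⟩
  · have h1 : x * (a + c) ≠ x * a := by
      intro h
      apply hc
      have h6 := mul_left_cancel₀ hx0 h
      linear_combination h6
    simp only [if_neg hc, if_neg h1]
    by_cases h2 : b + d = 0
    · have h3 : x⁻¹ * (b + d) = 0 := by rw [h2, mul_zero]
      simp only [if_pos h2, h3, if_pos rfl, if_true, Prod.mk.injEq]
      exact ⟨by ring, by simp⟩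
    · have h3 : x⁻¹ * (b + d) ≠ 0 := by
        intro h
        apply h2
        have h7 : x * (x⁻¹ * (b + d)) = 0 := by rw [h, mul_zero]
        rwa [← mul_assoc, mul_inv_cancel₀ hx0, one_mul] at h7
      simp only [if_neg h2, if_neg h3]
end

section
/- Let p be an odd prime and let σ be the permutation of ZMod p × ZMod p given by σ(c,d) = (y·c, y·d). Then for every (a,b) ∈ ZMod p × ZMod p, π⁻¹ ∘ π_{(x·a, x·b)} = σ⁻¹ ∘ (π⁻¹ ∘ π_{(a,b)}) ∘ σ; in particular, the permutations π⁻¹ ∘ π_{(xⁱ·a, xⁱ·b)} for i = 0, 1, …, p−2 are pairwise conjugate and have the same cycle structure. -/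
/-- With `σ(c,d) = (y·c, y·d)` (so `σ⁻¹(c,d) = (x·c, x·d)`, `y = x⁻¹`), we have
`π⁻¹ ∘ π_{(x·a, x·b)} = σ⁻¹ ∘ (π⁻¹ ∘ π_{(a,b)}) ∘ σ`; in particular, the
permutations `π⁻¹ ∘ π_{(xⁱ·a, xⁱ·b)}` are pairwise conjugate (hence have the same
cycle structure). -/
theorem stmt11 (p : ℕ) (hp : p.Prime) (hodd : Odd p) (x : ZMod p)
    (hx : ∀ z : ZMod p, z ≠ 0 → ∃ k : ℕ, x ^ k = z) (a b : ZMod p) :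
    (piInvPiab x (x * a) (x * b) =
      (fun cd : ZMod p × ZMod p => (x * cd.1, x * cd.2)) ∘
        piInvPiab x a b ∘
        (fun cd : ZMod p × ZMod p => (x⁻¹ * cd.1, x⁻¹ * cd.2))) ∧
    (∀ i : ℕ, i ≤ p - 2 →
      ∃ g : ZMod p × ZMod p → ZMod p × ZMod p, Function.Bijective g ∧
        piInvPiab x (x ^ i * a) (x ^ i * b) ∘ g = g ∘ piInvPiab x a b) := by
  haveI := Fact.mk hp
  -- x ≠ 0
  have hp2 : p ≠ 2 := by
    rintro rfl
    exact (Nat.not_odd_iff_even.mpr (by norm_num)) hodd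
  have h2 : (2 : ZMod p) ≠ 0 := by
    have hnd : ¬ (p ∣ 2) := fun hd => hp2 ((Nat.prime_dvd_prime_iff_eq hp Nat.prime_two).mp hd)
    intro h
    apply hnd
    have : ((2 : ℕ) : ZMod p) = 0 := by exact_mod_cast h
    exact (ZMod.natCast_eq_zero_iff 2 p).mp this
  have hxne : x ≠ 0 := by
    rintro rfl
    obtain ⟨k, hk⟩ := hx 2 h2
    rcases Nat.eq_zero_or_pos k with hk0 | hk0
    · rw [hk0, pow_zero] at hk
      have : (1 : ZMod p) = 0 := by linear_combination -hk
      exact one_ne_zero this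
    · rw [zero_pow hk0.ne'] at hk
      exact h2 hk.symm
  have hinv : x * x⁻¹ = 1 := mul_inv_cancel₀ hxne
  have hinv' : x⁻¹ * x = 1 := inv_mul_cancel₀ hxne
  -- key identity for all a b
  have key : ∀ A B : ZMod p, piInvPiab x (x * A) (x * B) =
      (fun cd : ZMod p × ZMod p => (x * cd.1, x * cd.2)) ∘
        piInvPiab x A B ∘
        (fun cd : ZMod p × ZMod p => (x⁻¹ * cd.1, x⁻¹ * cd.2)) := by
    intro A B
    funext cd
    obtain ⟨c, d⟩ := cd
    simp only [piInvPiab, piab, Function.comp_apply]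
    have hc : (x⁻¹ * c = 0) ↔ (c = 0) := by
      constructor
      · intro h
        have := congrArg (x * ·) h
        simpa [← mul_assoc, hinv] using this
      · intro h; simp [h]
    have hs1 : (A + B + x⁻¹ * d = 0) ↔ (x * A + x * B + d = 0) := by
      constructor
      · intro h
        have := congrArg (x * ·) h
        simp only [mul_add, ← mul_assoc, hinv, one_mul, mul_zero] at this
        linear_combination this
      · intro h
        have := congrArg (x⁻¹ * ·) h
        simp only [mul_add, ← mul_assoc, hinv', one_mul, mul_zero] at this
        linear_combination this
    have hs2 : (B + x⁻¹ * d = 0) ↔ (x * B + d = 0) := by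
      constructor
      · intro h
        have := congrArg (x * ·) h
        simp only [mul_add, ← mul_assoc, hinv, one_mul, mul_zero] at this
        linear_combination this
      · intro h
        have := congrArg (x⁻¹ * ·) h
        simp only [mul_add, ← mul_assoc, hinv', one_mul, mul_zero] at this
        linear_combination this
    by_cases h1 : c = 0 <;> by_cases h3 : x * A + x * B + d = 0 <;>
        by_cases h4 : x * B + d = 0 <;>
      simp [hc, hs1, hs2, h1, h3, h4, Prod.ext_iff]
    all_goals try constructor
    all_goals try field_simp
    all_goals try ring
    all_goals try tauto
  -- pointwise conjugation by σ⁻¹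
  have key2 : ∀ A B : ZMod p, ∀ cd : ZMod p × ZMod p,
      piInvPiab x (x * A) (x * B) (x * cd.1, x * cd.2) =
        (x * (piInvPiab x A B cd).1, x * (piInvPiab x A B cd).2) := by
    intro A B cd
    rw [key A B]
    simp only [Function.comp_apply, ← mul_assoc, hinv', one_mul]
  refine ⟨key a b, ?_⟩
  -- commutation for all powers
  have comm : ∀ i : ℕ, ∀ cd : ZMod p × ZMod p,
      piInvPiab x (x ^ i * a) (x ^ i * b) (x ^ i * cd.1, x ^ i * cd.2) =
        (x ^ i * (piInvPiab x a b cd).1, x ^ i * (piInvPiab x a b cd).2) := by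
    intro i
    induction i with
    | zero => intro cd; simp
    | succ n ih =>
      intro cd
      have e : ∀ z : ZMod p, x ^ (n + 1) * z = x * (x ^ n * z) := by
        intro z; ring
      rw [e a, e b, e cd.1, e cd.2, key2 (x ^ n * a) (x ^ n * b) (x ^ n * cd.1, x ^ n * cd.2)]
      rw [ih cd, Prod.ext_iff]
      constructor <;> · simp only []; ring
  intro i _
  refine ⟨fun cd => (x ^ i * cd.1, x ^ i * cd.2), ?_, ?_⟩
  · have hxi : x ^ i ≠ 0 := pow_ne_zero _ hxne
    constructor
    · intro u v h
      simp only [Prod.mk.injEq] at h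
      exact Prod.ext (mul_left_cancel₀ hxi h.1) (mul_left_cancel₀ hxi h.2)
    · intro v
      exact ⟨((x ^ i)⁻¹ * v.1, (x ^ i)⁻¹ * v.2), by
        simp [← mul_assoc, mul_inv_cancel₀ hxi]⟩
  · funext cd
    simp only [Function.comp_apply]
    exact comm i cd
end

section
/- Let p ≥ 5 be an odd prime. Every orbit of size at least 2 of the permutation (c,d) ↦ (x·c, y·d) of ZMod p × ZMod p contains at least one element of 𝓘⁽²⁾ and at least one element of 𝓘⁽¹⁾. -/
open Function

theorem orbit_eq_singleton_of_isFixedPt {α : Type*} {f : α → α} {u : α} (h : IsFixedPt f u) :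
    orbit f u = {u} := by
  ext v
  simp only [orbit, Set.mem_ofPred_eq, Set.mem_singleton_iff, iterate_fixed h, exists_const,
    eq_comm]

theorem natCast_zmod_ne_zero_of_lt {p n : ℕ} (hn : 0 < n) (hnp : n < p) : (n : ZMod p) ≠ 0 := by
  rw [Ne, ZMod.natCast_eq_zero_iff]
  exact Nat.not_dvd_of_pos_of_lt hn hnp

section Field

variable {F : Type*} [Field F]

def scale (x : F) (q : F × F) : F × F := (x * q.1, x⁻¹ * q.2)

theorem scale_iterate_apply (x : F) (k : ℕ) (q : F × F) :
    (scale x)^[k] q = (x ^ k * q.1, (x ^ k)⁻¹ * q.2) := by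
  induction k with
  | zero => simp
  | succ k ih =>
    rw [iterate_succ_apply', ih, scale, pow_succ, mul_inv_rev]
    ext <;> simp only <;> ring

variable {x : F} (hgen : ∀ z : F, z ≠ 0 → ∃ k : ℕ, x ^ k = z)
include hgen

theorem mk_mem_orbit_scale {c d z w : F} (hc : c ≠ 0) (hz : z ≠ 0) (h : z * w = c * d) :
    (z, w) ∈ orbit (scale x) (c, d) := by
  obtain ⟨k, hk⟩ := hgen (z / c) (div_ne_zero hz hc)
  refine ⟨k, ?_⟩
  rw [scale_iterate_apply, hk, Prod.mk.injEq]
  constructor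
  · field_simp
  · field_simp
    linear_combination -h

theorem zero_mk_mem_orbit_scale {d w : F} (hd : d ≠ 0) (hw : w ≠ 0) :
    ((0 : F), w) ∈ orbit (scale x) (0, d) := by
  obtain ⟨k, hk⟩ := hgen (d / w) (div_ne_zero hd hw)
  refine ⟨k, ?_⟩
  rw [scale_iterate_apply, hk, mul_zero, inv_div, div_mul_cancel₀ _ hd]

theorem not_isSquare_of_forall_pow_eq [Finite F] (hF : ringChar F ≠ 2) : ¬IsSquare x := by
  intro hsq
  obtain ⟨a, ha⟩ := FiniteField.exists_nonsquare hF
  rcases eq_or_ne a 0 with rfl | ha0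
  · exact ha IsSquare.zero
  · obtain ⟨k, rfl⟩ := hgen a ha0
    exact ha (hsq.pow k)

theorem exists_eq_mul_self_or_eq_mul_self_mul {n : F} (hn : n ≠ 0) :
    ∃ s, n = s * s ∨ n = s * s * x := by
  obtain ⟨m, rfl⟩ := hgen n hn
  obtain ⟨t, rfl | rfl⟩ := Nat.even_or_odd' m
  · exact ⟨x ^ t, Or.inl (by rw [two_mul, pow_add])⟩
  · exact ⟨x ^ t, Or.inr (by rw [pow_succ, two_mul, pow_add])⟩

end Field

def Straddles {α : Type*} (S T : Set α) : Prop := (∃ a ∈ S, a ∈ T) ∧ ∃ a ∈ S, a ∉ T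

section I2

variable {p : ℕ} [Fact p.Prime] {x : ZMod p}

theorem mk_mem_I2_iff {z w : ZMod p} (hz : z ≠ 0) (hw : w ≠ 0) :
    (z, w) ∈ I2 p x ↔ w = z ∨ w = z * x := by
  simp [I2, hz, hw]

theorem two_mul_mk_div_two_not_mem_I2 (h2 : (2 : ZMod p) ≠ 0) (h3 : (3 : ZMod p) ≠ 0)
    (hnsq : ¬IsSquare x) {s : ZMod p} (hs : s ≠ 0) : (2 * s, s / 2) ∉ I2 p x := by
  rw [mk_mem_I2_iff (mul_ne_zero h2 hs) (div_ne_zero hs h2)]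
  rintro (h | h)
  · field_simp at h
    exact h3 (by linear_combination -h)
  · refine hnsq ⟨2⁻¹, ?_⟩
    field_simp at h ⊢
    exact h.symm

theorem two_mul_mk_mul_div_two_not_mem_I2 (h2 : (2 : ZMod p) ≠ 0) (h3 : (3 : ZMod p) ≠ 0)
    (hnsq : ¬IsSquare x) {s : ZMod p} (hs : s ≠ 0) : (2 * s, s * x / 2) ∉ I2 p x := by
  have hx0 : x ≠ 0 := by rintro rfl; exact hnsq IsSquare.zero
  rw [mk_mem_I2_iff (mul_ne_zero h2 hs) (div_ne_zero (mul_ne_zero hs hx0) h2)]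
  rintro (h | h)
  · field_simp at h
    exact hnsq ⟨2, by rw [h, sq]⟩
  · field_simp at h
    exact h3 (by linear_combination -h)

variable (hgen : ∀ z : ZMod p, z ≠ 0 → ∃ k : ℕ, x ^ k = z) (h2 : (2 : ZMod p) ≠ 0)
include hgen h2

theorem straddles_orbit_scale_zero_mk {d : ZMod p} (hd : d ≠ 0) :
    Straddles (orbit (scale x) (0, d)) (I2 p x) := by
  have h21 : (2 : ZMod p) ≠ 1 := fun h => one_ne_zero (by linear_combination h)
  exact ⟨⟨_, zero_mk_mem_orbit_scale hgen hd one_ne_zero, by simp [I2]⟩,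
    ⟨_, zero_mk_mem_orbit_scale hgen hd h2, by simp [I2, h21]⟩⟩

theorem straddles_orbit_scale_mk_zero (hnsq : ¬IsSquare x) {c : ZMod p} (hc : c ≠ 0) :
    Straddles (orbit (scale x) (c, 0)) (I2 p x) := by
  have h21 : (2 : ZMod p) ≠ 1 := fun h => one_ne_zero (by linear_combination h)
  have hx0 : x ≠ 0 := by rintro rfl; exact hnsq IsSquare.zero
  exact ⟨⟨(1, 0), mk_mem_orbit_scale hgen hc one_ne_zero (by simp), by simp [I2]⟩,
    ⟨(2, 0), mk_mem_orbit_scale hgen hc h2 (by simp), by simp [I2, h2, h21, h2.symm, hx0]⟩⟩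

theorem straddles_orbit_scale_of_ne_zero (h3 : (3 : ZMod p) ≠ 0) (hnsq : ¬IsSquare x)
    {c d : ZMod p} (hc : c ≠ 0) (hd : d ≠ 0) : Straddles (orbit (scale x) (c, d)) (I2 p x) := by
  obtain ⟨s, hcd | hcd⟩ := exists_eq_mul_self_or_eq_mul_self_mul hgen (mul_ne_zero hc hd)
  all_goals have hs : s ≠ 0 := by rintro rfl; simp [hc, hd] at hcd
  · refine ⟨⟨(s, s), mk_mem_orbit_scale hgen hc hs hcd.symm, by simp [I2, hs]⟩,
      ⟨_, mk_mem_orbit_scale hgen hc (mul_ne_zero h2 hs) ?_,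
        two_mul_mk_div_two_not_mem_I2 h2 h3 hnsq hs⟩⟩
    rw [hcd]; field_simp
  · refine ⟨⟨(s, s * x), mk_mem_orbit_scale hgen hc hs (by rw [hcd, mul_assoc]),
        by simp [I2, hs]⟩,
      ⟨_, mk_mem_orbit_scale hgen hc (mul_ne_zero h2 hs) ?_,
        two_mul_mk_mul_div_two_not_mem_I2 h2 h3 hnsq hs⟩⟩
    rw [hcd]; field_simp

end I2

theorem stmt13_general (p : ℕ) (hp : p.Prime) (hp5 : 5 ≤ p) (x : ZMod p)
    (hx : ∀ z : ZMod p, z ≠ 0 → ∃ k : ℕ, x ^ k = z) :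
    ∀ u : ZMod p × ZMod p,
      2 ≤ (orbit (fun q : ZMod p × ZMod p => (x * q.1, x⁻¹ * q.2)) u).ncard →
        (∃ a ∈ orbit (fun q : ZMod p × ZMod p => (x * q.1, x⁻¹ * q.2)) u, a ∈ I2 p x) ∧
        (∃ a ∈ orbit (fun q : ZMod p × ZMod p => (x * q.1, x⁻¹ * q.2)) u, a ∉ I2 p x) := by
  have := Fact.mk hp
  have h2 : (2 : ZMod p) ≠ 0 := by
    exact_mod_cast natCast_zmod_ne_zero_of_lt (n := 2) two_pos (by omega)
  have h3 : (3 : ZMod p) ≠ 0 := by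
    exact_mod_cast natCast_zmod_ne_zero_of_lt (n := 3) three_pos (by omega)
  have hnsq : ¬IsSquare x := not_isSquare_of_forall_pow_eq hx (by rw [ZMod.ringChar_zmod_n]; omega)
  rintro ⟨c, d⟩ hcard
  rcases eq_or_ne c 0 with rfl | hc
  · rcases eq_or_ne d 0 with rfl | hd
    · rw [orbit_eq_singleton_of_isFixedPt (by simp [IsFixedPt])] at hcard
      simp at hcard
    · exact straddles_orbit_scale_zero_mk hx h2 hd
  rcases eq_or_ne d 0 with rfl | hd
  · exact straddles_orbit_scale_mk_zero hx h2 hnsq hc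
  · exact straddles_orbit_scale_of_ne_zero hx h2 h3 hnsq hc hd

/-- For `p ≥ 5`, every orbit of size at least 2 of the permutation
`(c,d) ↦ (x·c, y·d)` of `ZMod p × ZMod p` contains at least one element of `𝓘⁽²⁾`
and at least one element of its complement `𝓘⁽¹⁾`. -/
theorem stmt13 (p : ℕ) (hp : p.Prime) (hodd : Odd p) (hp5 : 5 ≤ p) (x : ZMod p)
    (hx : ∀ z : ZMod p, z ≠ 0 → ∃ k : ℕ, x ^ k = z) :
    ∀ u : ZMod p × ZMod p,
      2 ≤ (orbit (fun q : ZMod p × ZMod p => (x * q.1, x⁻¹ * q.2)) u).ncard →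
        (∃ a ∈ orbit (fun q : ZMod p × ZMod p => (x * q.1, x⁻¹ * q.2)) u, a ∈ I2 p x) ∧
        (∃ a ∈ orbit (fun q : ZMod p × ZMod p => (x * q.1, x⁻¹ * q.2)) u, a ∉ I2 p x) :=
  stmt13_general p hp hp5 x hx
end

section
/- Let p be an odd prime and let b ∈ ZMod p with b ≠ 0. The permutation π⁻¹ ∘ π_{(0,b)} of ZMod p × ZMod p has exactly one fixed point, namely (0, b·(x−1)⁻¹), and exactly two orbits of size at least 2: one orbit is precisely the set {(c, b·(x−1)⁻¹) : c ∈ ZMod p, c ≠ 0} of size p − 1, and the other orbit has size p² − p and contains (0,0). -/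
/-!
The second coordinate of `f = π⁻¹ ∘ π_{(0,b)}` evolves by the affine map `d ↦ x⁻¹ (b + d)`,
whatever the first coordinate is. Its fixed point is `d₀ = b (x - 1)⁻¹`, and `d - d₀` is
multiplied by `x⁻¹` at each step. Hence the line `d = d₀` is invariant, `f (c, d₀) = (x c, d₀)`
there, and it splits into the fixed point `(0, d₀)` and one orbit of size `p - 1`.

Off that line the first coordinate is multiplied by `x`, except at the step leaving `d = -b`,
where it is also shifted by `x² b`. Starting on the fibre `d = 0`, that happens exactly once
per period `ord x` of the second coordinate, so `f^[ord x]` translates the fibre `d = 0` by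
`x² b ≠ 0`. Together with the transitivity of `x⁻¹` on the nonzero values of `d - d₀`, this
makes the complement of the line a single orbit.
-/

section Orbit

variable {α : Type*} {f : α → α} {u : α}

lemma iterate_mem_orbit (k : ℕ) : f^[k] u ∈ orbit f u := ⟨k, rfl⟩

lemma orbit_iterate_subset (k : ℕ) : orbit f (f^[k] u) ⊆ orbit f u := by
  rintro _ ⟨j, rfl⟩
  exact ⟨j + k, Function.iterate_add_apply f j k u⟩

lemma orbit_eq_singleton_of_apply_eq (hu : f u = u) : orbit f u = {u} := by
  ext v
  simp only [orbit, Function.iterate_fixed hu, Set.mem_ofPred_eq, Set.mem_singleton_iff,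
    exists_const, eq_comm]

end Orbit

lemma ne_zero_and_ne_one_of_pow_eq_neg_one {R : Type*} [Ring R] [Nontrivial R] {x : R} {k : ℕ}
    (h : (-1 : R) ≠ 1) (hk : x ^ k = -1) : x ≠ 0 ∧ x ≠ 1 := by
  refine ⟨?_, ?_⟩ <;> rintro rfl
  · rcases k with _ | k
    · exact h (by simpa using hk.symm)
    · exact neg_ne_zero.mpr (one_ne_zero' R) (by simpa using hk.symm)
  · exact h (by simpa using hk.symm)

lemma orderOf_pos_of_ne_zero {K : Type*} [Field K] [Finite K] {x : K} (hx : x ≠ 0) :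
    0 < orderOf x := by
  rw [← Units.val_mk0 hx, orderOf_units]
  exact orderOf_pos _

lemma ncard_setOf_fst_ne_and_snd_eq {α β : Type*} [Finite α] (a : α) (d : β) :
    {q : α × β | q.1 ≠ a ∧ q.2 = d}.ncard = Nat.card α - 1 := by
  have : {q : α × β | q.1 ≠ a ∧ q.2 = d} = {a}ᶜ ×ˢ {d} := by ext; simp
  rw [this, Set.ncard_prod, Set.ncard_singleton, mul_one, Set.ncard_compl, Set.ncard_singleton]

lemma ncard_setOf_snd_ne {α β : Type*} [Finite α] [Finite β] (d : β) :
    {q : α × β | q.2 ≠ d}.ncard = Nat.card α * (Nat.card β - 1) := by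
  have : {q : α × β | q.2 ≠ d} = Set.univ ×ˢ {d}ᶜ := by ext; simp
  rw [this, Set.ncard_prod, Set.ncard_univ, Set.ncard_compl, Set.ncard_singleton]

section PiInvPiab

variable {p : ℕ}

lemma piInvPiab_zero_apply (x b : ZMod p) (u : ZMod p × ZMod p) :
    piInvPiab x 0 b u =
      (x * (u.1 + if b + u.2 = 0 then x * b else 0), x⁻¹ * (b + u.2)) := by
  unfold piInvPiab piab
  by_cases hc : u.1 = 0 <;> by_cases hd : b + u.2 = 0 <;> simp [hc, hd]

variable [Fact p.Prime] {x b : ZMod p}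

lemma add_mul_inv_sub_one (hx1 : x ≠ 1) : b + b * (x - 1)⁻¹ = x * (b * (x - 1)⁻¹) := by
  field_simp [sub_ne_zero.mpr hx1]
  ring

lemma mul_inv_sub_one_ne_zero (hx1 : x ≠ 1) (hb : b ≠ 0) : b * (x - 1)⁻¹ ≠ 0 :=
  mul_ne_zero hb (inv_ne_zero (sub_ne_zero.mpr hx1))

lemma snd_iterate_piInvPiab_zero_sub (hx0 : x ≠ 0) (hx1 : x ≠ 1) (u : ZMod p × ZMod p)
    (k : ℕ) :
    ((piInvPiab x 0 b)^[k] u).2 - b * (x - 1)⁻¹ = x⁻¹ ^ k * (u.2 - b * (x - 1)⁻¹) := by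
  induction k with
  | zero => simp
  | succ k ih =>
    rw [Function.iterate_succ_apply', pow_succ', mul_assoc, ← ih, piInvPiab_zero_apply]
    linear_combination
      b * (x - 1)⁻¹ * mul_inv_cancel₀ hx0 + x⁻¹ * add_mul_inv_sub_one (b := b) hx1

lemma snd_iterate_piInvPiab_zero_eq_iff (hx0 : x ≠ 0) (hx1 : x ≠ 1) (u : ZMod p × ZMod p)
    (k : ℕ) : ((piInvPiab x 0 b)^[k] u).2 = b * (x - 1)⁻¹ ↔ u.2 = b * (x - 1)⁻¹ := by
  rw [← sub_eq_zero, snd_iterate_piInvPiab_zero_sub hx0 hx1, mul_eq_zero, sub_eq_zero]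
  simp [hx0]

lemma piInvPiab_zero_apply_mk_mul_inv_sub_one (hx0 : x ≠ 0) (hx1 : x ≠ 1) (hb : b ≠ 0)
    (c : ZMod p) : piInvPiab x 0 b (c, b * (x - 1)⁻¹) = (x * c, b * (x - 1)⁻¹) := by
  have hne : b + b * (x - 1)⁻¹ ≠ 0 := by
    rw [add_mul_inv_sub_one hx1]
    exact mul_ne_zero hx0 (mul_inv_sub_one_ne_zero hx1 hb)
  rw [piInvPiab_zero_apply, if_neg hne, add_mul_inv_sub_one hx1, inv_mul_cancel_left₀ hx0,
    add_zero]

lemma iterate_piInvPiab_zero_mk_mul_inv_sub_one (hx0 : x ≠ 0) (hx1 : x ≠ 1) (hb : b ≠ 0)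
    (c : ZMod p) (k : ℕ) :
    (piInvPiab x 0 b)^[k] (c, b * (x - 1)⁻¹) = (x ^ k * c, b * (x - 1)⁻¹) := by
  induction k with
  | zero => simp
  | succ k ih =>
    rw [Function.iterate_succ_apply', ih, piInvPiab_zero_apply_mk_mul_inv_sub_one hx0 hx1 hb,
      pow_succ', mul_assoc]

lemma piInvPiab_zero_eq_self_iff (hx0 : x ≠ 0) (hx1 : x ≠ 1) (hb : b ≠ 0)
    (u : ZMod p × ZMod p) : piInvPiab x 0 b u = u ↔ u = (0, b * (x - 1)⁻¹) := by
  constructor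
  · intro h
    obtain ⟨c, d⟩ := u
    have hd : d = b * (x - 1)⁻¹ := by
      have h1 := snd_iterate_piInvPiab_zero_sub (b := b) hx0 hx1 (c, d) 1
      rw [Function.iterate_one, h, pow_one] at h1
      have h2 : (1 - x⁻¹) * (d - b * (x - 1)⁻¹) = 0 := by linear_combination h1
      rcases mul_eq_zero.mp h2 with h3 | h3
      · exact absurd (sub_eq_zero.mp h3).symm (inv_ne_one.mpr hx1)
      · exact sub_eq_zero.mp h3
    subst hd
    rw [piInvPiab_zero_apply_mk_mul_inv_sub_one hx0 hx1 hb, Prod.mk.injEq] at h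
    have hc : (x - 1) * c = 0 := by linear_combination h.1
    rw [(mul_eq_zero.mp hc).resolve_left (sub_ne_zero.mpr hx1)]
  · rintro rfl
    rw [piInvPiab_zero_apply_mk_mul_inv_sub_one hx0 hx1 hb, mul_zero]

lemma orbit_piInvPiab_zero_mk_mul_inv_sub_one
    (hx : ∀ z : ZMod p, z ≠ 0 → ∃ k : ℕ, x ^ k = z) (hx0 : x ≠ 0) (hx1 : x ≠ 1) (hb : b ≠ 0)
    {c : ZMod p} (hc : c ≠ 0) :
    orbit (piInvPiab x 0 b) (c, b * (x - 1)⁻¹) =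
      {q : ZMod p × ZMod p | q.1 ≠ 0 ∧ q.2 = b * (x - 1)⁻¹} := by
  ext ⟨c', d'⟩
  simp only [orbit, iterate_piInvPiab_zero_mk_mul_inv_sub_one hx0 hx1 hb, Set.mem_ofPred_eq,
    Prod.mk.injEq]
  constructor
  · rintro ⟨k, rfl, rfl⟩
    exact ⟨mul_ne_zero (pow_ne_zero _ hx0) hc, rfl⟩
  · rintro ⟨hc', rfl⟩
    obtain ⟨k, hk⟩ := hx (c' * c⁻¹) (mul_ne_zero hc' (inv_ne_zero hc))
    exact ⟨k, by rw [hk, inv_mul_cancel_right₀ hc], rfl⟩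

lemma add_snd_iterate_piInvPiab_zero_eq_zero_iff (hx0 : x ≠ 0) (hx1 : x ≠ 1) (hb : b ≠ 0)
    (c : ZMod p) (i : ℕ) : b + ((piInvPiab x 0 b)^[i] (c, 0)).2 = 0 ↔ x ^ (i + 1) = 1 := by
  have hxi : x ^ i * x⁻¹ ^ i = 1 := by rw [← mul_pow, mul_inv_cancel₀ hx0, one_pow]
  have key : b + ((piInvPiab x 0 b)^[i] (c, 0)).2 =
      b * (x - 1)⁻¹ * x⁻¹ ^ i * (x ^ (i + 1) - 1) := by
    rw [pow_succ]
    linear_combination snd_iterate_piInvPiab_zero_sub (b := b) hx0 hx1 (c, 0) i +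
      add_mul_inv_sub_one (b := b) hx1 - (b * (x - 1)⁻¹ * x) * hxi
  rw [key]
  simp [mul_inv_sub_one_ne_zero hx1 hb, hx0, sub_eq_zero]

lemma fst_iterate_piInvPiab_zero_mk_zero (hx0 : x ≠ 0) (hx1 : x ≠ 1) (hb : b ≠ 0)
    (c : ZMod p) {j : ℕ} (hj : j < orderOf x) :
    ((piInvPiab x 0 b)^[j] (c, 0)).1 = x ^ j * c := by
  induction j with
  | zero => simp
  | succ j ih =>
    have hno : ¬ b + ((piInvPiab x 0 b)^[j] (c, 0)).2 = 0 := by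
      rw [add_snd_iterate_piInvPiab_zero_eq_zero_iff hx0 hx1 hb]
      exact pow_ne_one_of_lt_orderOf j.succ_ne_zero hj
    rw [Function.iterate_succ_apply', piInvPiab_zero_apply, if_neg hno, add_zero,
      ih (by omega), pow_succ', mul_assoc]

lemma iterate_orderOf_piInvPiab_zero_mk_zero (hx0 : x ≠ 0) (hx1 : x ≠ 1) (hb : b ≠ 0)
    (c : ZMod p) : (piInvPiab x 0 b)^[orderOf x] (c, 0) = (c + x ^ 2 * b, 0) := by
  obtain ⟨m, hm⟩ := Nat.exists_eq_add_one_of_ne_zero (orderOf_pos_of_ne_zero hx0).ne'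
  have hshift : b + ((piInvPiab x 0 b)^[m] (c, 0)).2 = 0 := by
    rw [add_snd_iterate_piInvPiab_zero_eq_zero_iff hx0 hx1 hb, ← hm, pow_orderOf_eq_one]
  have hxm : x * x ^ m = 1 := by rw [← pow_succ', ← hm, pow_orderOf_eq_one]
  rw [hm, Function.iterate_succ_apply', piInvPiab_zero_apply, if_pos hshift, hshift, mul_zero,
    fst_iterate_piInvPiab_zero_mk_zero hx0 hx1 hb c (by omega)]
  congr 1
  linear_combination c * hxm

lemma iterate_orderOf_mul_piInvPiab_zero_mk_zero (hx0 : x ≠ 0) (hx1 : x ≠ 1) (hb : b ≠ 0)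
    (c : ZMod p) (q : ℕ) :
    (piInvPiab x 0 b)^[orderOf x * q] (c, 0) = (c + q * (x ^ 2 * b), 0) := by
  induction q with
  | zero => simp
  | succ q ih =>
    rw [Nat.mul_succ, add_comm, Function.iterate_add_apply, ih,
      iterate_orderOf_piInvPiab_zero_mk_zero hx0 hx1 hb]
    congr 1
    push_cast
    ring

lemma setOf_snd_ne_subset_orbit_piInvPiab_zero_mk_zero
    (hx : ∀ z : ZMod p, z ≠ 0 → ∃ k : ℕ, x ^ k = z) (hx0 : x ≠ 0) (hx1 : x ≠ 1) (hb : b ≠ 0)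
    (c : ZMod p) :
    {q : ZMod p × ZMod p | q.2 ≠ b * (x - 1)⁻¹} ⊆ orbit (piInvPiab x 0 b) (c, 0) := by
  rintro ⟨c', d'⟩ (hd' : d' ≠ b * (x - 1)⁻¹)
  set d₀ := b * (x - 1)⁻¹
  have hd₀ : d₀ ≠ 0 := mul_inv_sub_one_ne_zero hx1 hb
  have hsub : d₀ - d' ≠ 0 := sub_ne_zero.mpr hd'.symm
  obtain ⟨k, hk⟩ := hx (d₀ * (d₀ - d')⁻¹) (mul_ne_zero hd₀ (inv_ne_zero hsub))
  set j := k % orderOf x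
  have hj : j < orderOf x := Nat.mod_lt k (orderOf_pos_of_ne_zero hx0)
  have hxj : x⁻¹ ^ j * d₀ = d₀ - d' := by
    rw [inv_pow, pow_mod_orderOf, hk]
    field_simp
  set w : ZMod p := ((x ^ j)⁻¹ * c' - c) * (x ^ 2 * b)⁻¹
  have hw : w * (x ^ 2 * b) = (x ^ j)⁻¹ * c' - c :=
    inv_mul_cancel_right₀ (mul_ne_zero (pow_ne_zero 2 hx0) hb) _
  refine ⟨j + orderOf x * w.val, ?_⟩
  rw [Function.iterate_add_apply, iterate_orderOf_mul_piInvPiab_zero_mk_zero hx0 hx1 hb,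
    ZMod.natCast_zmod_val]
  ext
  · rw [fst_iterate_piInvPiab_zero_mk_zero hx0 hx1 hb _ hj, hw, add_sub_cancel,
      mul_inv_cancel_left₀ (pow_ne_zero j hx0)]
  · linear_combination
      snd_iterate_piInvPiab_zero_sub (b := b) hx0 hx1 (c + w * (x ^ 2 * b), 0) j - hxj

lemma exists_snd_iterate_piInvPiab_zero_eq_zero
    (hx : ∀ z : ZMod p, z ≠ 0 → ∃ k : ℕ, x ^ k = z) (hx0 : x ≠ 0) (hx1 : x ≠ 1) (hb : b ≠ 0)
    {u : ZMod p × ZMod p} (hu : u.2 ≠ b * (x - 1)⁻¹) :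
    ∃ k, ((piInvPiab x 0 b)^[k] u).2 = 0 := by
  set d₀ := b * (x - 1)⁻¹
  have hd₀ : d₀ ≠ 0 := mul_inv_sub_one_ne_zero hx1 hb
  have hsub : d₀ - u.2 ≠ 0 := sub_ne_zero.mpr hu.symm
  obtain ⟨k, hk⟩ := hx ((d₀ - u.2) * d₀⁻¹) (mul_ne_zero hsub (inv_ne_zero hd₀))
  have hxk : x⁻¹ ^ k * (d₀ - u.2) = d₀ := by
    rw [inv_pow, hk]
    field_simp
  exact ⟨k, by linear_combination snd_iterate_piInvPiab_zero_sub (b := b) hx0 hx1 u k - hxk⟩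

lemma orbit_piInvPiab_zero_of_snd_ne
    (hx : ∀ z : ZMod p, z ≠ 0 → ∃ k : ℕ, x ^ k = z) (hx0 : x ≠ 0) (hx1 : x ≠ 1) (hb : b ≠ 0)
    {u : ZMod p × ZMod p} (hu : u.2 ≠ b * (x - 1)⁻¹) :
    orbit (piInvPiab x 0 b) u = {q : ZMod p × ZMod p | q.2 ≠ b * (x - 1)⁻¹} := by
  refine subset_antisymm ?_ ?_
  · rintro _ ⟨k, rfl⟩
    exact (snd_iterate_piInvPiab_zero_eq_iff hx0 hx1 u k).not.mpr hu
  · obtain ⟨k, hk⟩ := exists_snd_iterate_piInvPiab_zero_eq_zero hx hx0 hx1 hb hu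
    have hfibre : (piInvPiab x 0 b)^[k] u = (((piInvPiab x 0 b)^[k] u).1, 0) := Prod.ext rfl hk
    calc _ ⊆ orbit (piInvPiab x 0 b) (((piInvPiab x 0 b)^[k] u).1, 0) :=
          setOf_snd_ne_subset_orbit_piInvPiab_zero_mk_zero hx hx0 hx1 hb _
      _ = orbit (piInvPiab x 0 b) ((piInvPiab x 0 b)^[k] u) := by rw [← hfibre]
      _ ⊆ orbit (piInvPiab x 0 b) u := orbit_iterate_subset k

end PiInvPiab

/-- For `b ≠ 0`, the permutation `π⁻¹ ∘ π_{(0,b)}` has exactly one fixed point,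
namely `(0, b·(x−1)⁻¹)`, and exactly two orbits of size at least 2: one is precisely
`{(c, b·(x−1)⁻¹) : c ≠ 0}` of size `p − 1`, and the other has size `p² − p` and
contains `(0,0)`. -/
theorem stmt14 (p : ℕ) (hp : p.Prime) (hodd : Odd p) (x : ZMod p)
    (hx : ∀ z : ZMod p, z ≠ 0 → ∃ k : ℕ, x ^ k = z) (b : ZMod p) (hb : b ≠ 0) :
    (∀ cd : ZMod p × ZMod p,
      piInvPiab x 0 b cd = cd ↔ cd = (0, b * (x - 1)⁻¹)) ∧
    ∃ u v : ZMod p × ZMod p,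
      orbit (piInvPiab x 0 b) u =
        {q : ZMod p × ZMod p | q.1 ≠ 0 ∧ q.2 = b * (x - 1)⁻¹} ∧
      (orbit (piInvPiab x 0 b) u).ncard = p - 1 ∧
      (orbit (piInvPiab x 0 b) v).ncard = p ^ 2 - p ∧
      (0, 0) ∈ orbit (piInvPiab x 0 b) v ∧
      ∀ w : ZMod p × ZMod p, 2 ≤ (orbit (piInvPiab x 0 b) w).ncard →
        orbit (piInvPiab x 0 b) w = orbit (piInvPiab x 0 b) u ∨
        orbit (piInvPiab x 0 b) w = orbit (piInvPiab x 0 b) v := by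
  have := Fact.mk hp
  have : Fact (2 < p) := ⟨hp.two_le.lt_of_ne' (by rintro rfl; exact absurd hodd (by decide))⟩
  obtain ⟨k, hk⟩ := hx (-1) (neg_ne_zero.mpr one_ne_zero)
  obtain ⟨hx0, hx1⟩ := ne_zero_and_ne_one_of_pow_eq_neg_one ZMod.neg_one_ne_one hk
  have hline := orbit_piInvPiab_zero_mk_mul_inv_sub_one hx hx0 hx1 hb one_ne_zero
  have hbig := orbit_piInvPiab_zero_of_snd_ne hx hx0 hx1 hb (u := (0, 0))
    (mul_inv_sub_one_ne_zero hx1 hb).symm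
  refine ⟨piInvPiab_zero_eq_self_iff hx0 hx1 hb, _, (0, 0), hline, ?_, ?_, iterate_mem_orbit 0,
    ?_⟩
  · rw [hline, ncard_setOf_fst_ne_and_snd_eq, Nat.card_zmod]
  · rw [hbig, ncard_setOf_snd_ne, Nat.card_zmod, Nat.mul_sub_one, sq]
  · rintro ⟨c, d⟩ hw
    by_cases hd : d = b * (x - 1)⁻¹
    · subst hd
      obtain rfl | hc := eq_or_ne c 0
      · rw [orbit_eq_singleton_of_apply_eq ((piInvPiab_zero_eq_self_iff hx0 hx1 hb _).mpr rfl),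
          Set.ncard_singleton] at hw
        omega
      · exact .inl (by rw [hline, orbit_piInvPiab_zero_mk_mul_inv_sub_one hx hx0 hx1 hb hc])
    · exact .inr (by rw [hbig, orbit_piInvPiab_zero_of_snd_ne hx hx0 hx1 hb hd])
end

section
/- Let p be an odd prime and let a, b ∈ ZMod p with a ≠ 0 and b ≠ 0. The permutation π⁻¹ ∘ π_{(a,b)} of ZMod p × ZMod p has exactly one fixed point, namely (a·(y−1)⁻¹, b·(x−1)⁻¹), and exactly two orbits of size at least 2; moreover the orbit containing (0, b·(x−1)⁻¹) contains the whole set {(c, b·(x−1)⁻¹) : c ∈ ZMod p, c ≠ a·(y−1)⁻¹}, and the other orbit contains the whole set {(a·(y−1)⁻¹, d) : d ∈ ZMod p, d ≠ b·(x−1)⁻¹}. -/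
open Function Relation

section Orbit

variable {α : Type*} {f : α → α}

theorem orbit_subset_of_mem {q z : α} (h : z ∈ orbit f q) : orbit f z ⊆ orbit f q := by
  obtain ⟨k, rfl⟩ := h
  rintro _ ⟨m, rfl⟩
  exact ⟨m + k, iterate_add_apply f m k q⟩

theorem orbit_eq_of_mem [Finite α] (hf : Injective f) {q z : α} (h : z ∈ orbit f q) :
    orbit f z = orbit f q := by
  refine (orbit_subset_of_mem h).antisymm (orbit_subset_of_mem ?_)
  obtain ⟨k, rfl⟩ := h
  obtain ⟨n, hn, hper⟩ := hf.mem_periodicPts q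
  obtain ⟨m, rfl⟩ := Nat.exists_eq_add_one_of_ne_zero hn.ne'
  refine ⟨m * k, ?_⟩
  rw [← iterate_add_apply, ← add_one_mul]
  exact hper.mul_const k

theorem orbit_eq_singleton {q : α} (h : f q = q) : orbit f q = {q} :=
  Set.eq_singleton_iff_unique_mem.2 ⟨⟨0, rfl⟩, fun _ ⟨k, hk⟩ => hk ▸ iterate_fixed h k⟩

theorem two_le_ncard_orbit_iff [Finite α] {q : α} : 2 ≤ (orbit f q).ncard ↔ f q ≠ q := by
  refine ⟨fun h hq => by simp [orbit_eq_singleton hq] at h, fun hq => ?_⟩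
  rw [← Set.ncard_pair hq.symm]
  refine Set.ncard_le_ncard ?_ (Set.toFinite _)
  rintro _ (rfl | rfl)
  exacts [⟨0, rfl⟩, ⟨1, rfl⟩]

def StepWithin (f : α → α) (s : Set α) (z z' : α) : Prop := z ∈ s ∧ f z = z'

theorem reflTransGen_stepWithin_iterate {s : Set α} {q : α} {n : ℕ}
    (h : ∀ i < n, f^[i] q ∈ s) : ReflTransGen (StepWithin f s) q (f^[n] q) := by
  induction n with
  | zero => exact .refl
  | succ n ih =>
    exact (ih fun i hi => h i (hi.trans n.lt_succ_self)).tail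
      ⟨h n n.lt_succ_self, (iterate_succ_apply' f n q).symm⟩

theorem mem_orbit_of_reflTransGen {s : Set α} {q z : α}
    (h : ReflTransGen (StepWithin f s) q z) : z ∈ orbit f q := by
  induction h with
  | refl => exact ⟨0, rfl⟩
  | tail _ hstep ih =>
    obtain ⟨k, rfl⟩ := ih
    exact ⟨k + 1, by rw [iterate_succ_apply', hstep.2]⟩

theorem orbit_subset_of_transGen {s : Set α} {q : α} (h : TransGen (StepWithin f s) q q) :
    orbit f q ⊆ s := by
  have hinv : ∀ z, TransGen (StepWithin f s) z q → z ∈ s ∧ TransGen (StepWithin f s) (f z) q := by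
    intro z hz
    obtain ⟨z', ⟨hz, rfl⟩, hz'⟩ := TransGen.head'_iff.1 hz
    exact ⟨hz, (reflTransGen_iff_eq_or_transGen.1 hz').elim (fun he => he ▸ h) id⟩
  rintro _ ⟨k, rfl⟩
  suffices TransGen (StepWithin f s) (f^[k] q) q from (hinv _ this).1
  induction k with
  | zero => exact h
  | succ k ih => rw [iterate_succ_apply']; exact (hinv _ ih).2

end Orbit

namespace IsPrimitiveRoot

variable {p : ℕ} [Fact p.Prime] {ζ : ZMod p}

theorem exists_pow_mul_eq_first (hζ : IsPrimitiveRoot ζ (p - 1)) {u t : ZMod p} (hu : u ≠ 0)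
    (ht : t ≠ 0) : ∃ n < p - 1, ζ ^ n * u = t ∧ ∀ i < n, ζ ^ i * u ≠ t := by
  have : NeZero (p - 1) := ⟨Nat.sub_ne_zero_of_lt (Fact.out : p.Prime).one_lt⟩
  obtain ⟨n, hn, hζn⟩ := hζ.eq_pow_of_pow_eq_one (ZMod.pow_card_sub_one_eq_one (div_ne_zero ht hu))
  have hnu : ζ ^ n * u = t := by rw [hζn, div_mul_cancel₀ _ hu]
  refine ⟨n, hn, hnu, fun i hi hiu => hi.ne ?_⟩
  exact hζ.pow_inj (hi.trans hn) hn (mul_right_cancel₀ hu (hiu.trans hnu.symm))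

theorem not_isSquare (hζ : IsPrimitiveRoot ζ (p - 1)) (hp : p ≠ 2) : ¬IsSquare ζ := by
  have h3 : 3 ≤ p := (Fact.out : p.Prime).two_le.lt_of_ne' hp
  rw [ZMod.euler_criterion p (hζ.ne_zero (by omega))]
  exact hζ.pow_ne_one_of_pos_of_lt (by omega) (by omega)

end IsPrimitiveRoot

theorem ne_zero_of_forall_exists_pow_eq {p : ℕ} [Fact p.Prime] (hodd : Odd p) {x : ZMod p}
    (hx : ∀ z : ZMod p, z ≠ 0 → ∃ k : ℕ, x ^ k = z) : x ≠ 0 := by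
  rintro rfl
  obtain ⟨k, hk⟩ := hx (-1) (neg_ne_zero.2 one_ne_zero)
  rcases k with _ | k
  · exact ZMod.ne_neg_self hodd one_ne_zero (by rwa [pow_zero] at hk)
  · simp at hk

theorem isPrimitiveRoot_of_forall_exists_pow_eq {p : ℕ} [Fact p.Prime] {x : ZMod p}
    (hx0 : x ≠ 0) (hx : ∀ z : ZMod p, z ≠ 0 → ∃ k : ℕ, x ^ k = z) : IsPrimitiveRoot x (p - 1) := by
  have hgen : ∀ w : (ZMod p)ˣ, w ∈ Subgroup.zpowers (Units.mk0 x hx0) := fun w => by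
    obtain ⟨k, hk⟩ := hx w w.ne_zero
    exact ⟨k, Units.ext (by simpa using hk)⟩
  have hord := orderOf_eq_card_of_forall_mem_zpowers hgen
  rw [Nat.card_eq_fintype_card, ZMod.card_units] at hord
  simpa [hord] using IsPrimitiveRoot.coe_units_iff.2 (IsPrimitiveRoot.orderOf (Units.mk0 x hx0))

section Map

variable {p : ℕ} (x a b : ZMod p)

def shearAtZero (cd : ZMod p × ZMod p) : ZMod p × ZMod p :=
  if cd.1 = 0 then (cd.1, cd.2 + a) else cd

def wrapTranslate (cd : ZMod p × ZMod p) : ZMod p × ZMod p :=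
  if b + cd.2 = 0 then (a + cd.1 + x * b, 0) else (a + cd.1, b + cd.2)

theorem piab_eq_comp : piab x a b = wrapTranslate x a b ∘ shearAtZero a := by
  funext ⟨c, d⟩
  by_cases hc : c = 0
  · have hd : b + (d + a) = a + b + d := by ring
    simp only [piab, wrapTranslate, shearAtZero, comp_apply, hc, if_true, hd, add_zero]
    split_ifs <;> simp_all
  · simp [piab, wrapTranslate, shearAtZero, hc]

theorem shearAtZero_injective : Injective (shearAtZero (p := p) a) := by
  rintro ⟨c, d⟩ ⟨c', d'⟩ h
  simp only [shearAtZero] at h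
  split_ifs at h <;> simp_all

theorem wrapTranslate_injective : Injective (wrapTranslate x a b) := by
  rintro ⟨c, d⟩ ⟨c', d'⟩ h
  simp only [wrapTranslate] at h
  split_ifs at h with h₁ h₂ h₂ <;> simp only [Prod.mk.injEq] at h
  · exact Prod.ext (by linear_combination h.1) (by linear_combination h₁ - h₂)
  · exact absurd h.2.symm h₂
  · exact absurd h.2 h₁
  · exact Prod.ext (by linear_combination h.1) (by linear_combination h.2)

theorem piInvPiab_injective [Fact p.Prime] (hx : x ≠ 0) : Injective (piInvPiab x a b) := by
  intro q q' h
  simp only [piInvPiab, Prod.mk.injEq, mul_right_inj' hx, mul_right_inj' (inv_ne_zero hx)] at h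
  rw [piab_eq_comp] at h
  exact shearAtZero_injective a (wrapTranslate_injective x a b (Prod.ext h.1 h.2))

variable {x a b}

theorem piInvPiab_of_ne_zero {c d : ZMod p} (hc : c ≠ 0) (hd : b + d ≠ 0) :
    piInvPiab x a b (c, d) = (x * (a + c), x⁻¹ * (b + d)) := by
  simp [piInvPiab, piab, hc, hd]

theorem piInvPiab_of_eq_neg {c d : ZMod p} (hc : c ≠ 0) (hd : b + d = 0) :
    piInvPiab x a b (c, d) = (x * (a + c + x * b), 0) := by
  simp [piInvPiab, piab, hc, hd]

theorem piInvPiab_zero {d : ZMod p} (hd : a + b + d ≠ 0) :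
    piInvPiab x a b (0, d) = (x * a, x⁻¹ * (a + b + d)) := by
  simp [piInvPiab, piab, hd]

theorem piInvPiab_zero_of_eq_zero {d : ZMod p} (hd : a + b + d = 0) :
    piInvPiab x a b (0, d) = (x * (a + x * b), 0) := by
  simp [piInvPiab, piab, hd]

end Map

structure PiabParams (p : ℕ) where
  x : ZMod p
  a : ZMod p
  b : ZMod p
  isPrimitiveRoot : IsPrimitiveRoot x (p - 1)
  ne_two : p ≠ 2
  a_ne_zero : a ≠ 0
  b_ne_zero : b ≠ 0

namespace PiabParams

variable {p : ℕ} [Fact p.Prime] (P : PiabParams p)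

def f : ZMod p × ZMod p → ZMod p × ZMod p := piInvPiab P.x P.a P.b

def c0 : ZMod p := P.a * (P.x⁻¹ - 1)⁻¹

def d0 : ZMod p := P.b * (P.x - 1)⁻¹

def pt (u v : ZMod p) : ZMod p × ZMod p := (P.c0 + u, P.d0 + v)

/-- The first-return map of `f` to the line `c = 0` is `v ↦ v + shift` away from `v = -a` and
`v = -shift`: the excursion lowers the invariant `u v` by `a c0`, then by `x² b d0`. -/
def shift : ZMod p := P.a + P.x ^ 2 * P.b * P.d0 * P.c0⁻¹

def StepOffVertical : ZMod p × ZMod p → ZMod p × ZMod p → Prop := StepWithin P.f {z | z.1 ≠ P.c0}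

theorem x_ne_zero : P.x ≠ 0 :=
  P.isPrimitiveRoot.ne_zero (Nat.sub_ne_zero_of_lt (Fact.out : p.Prime).one_lt)

theorem x_ne_one : P.x ≠ 1 :=
  P.isPrimitiveRoot.ne_one (by have := (Fact.out : p.Prime).two_le; have := P.ne_two; omega)

theorem pow_ne_one {n : ℕ} (h0 : n ≠ 0) (hn : n < p - 1) : P.x ^ n ≠ 1 :=
  P.isPrimitiveRoot.pow_ne_one_of_pos_of_lt h0 hn

theorem c0_ne_zero : P.c0 ≠ 0 :=
  mul_ne_zero P.a_ne_zero (inv_ne_zero (sub_ne_zero.2 (inv_ne_one.2 P.x_ne_one)))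

theorem d0_ne_zero : P.d0 ≠ 0 :=
  mul_ne_zero P.b_ne_zero (inv_ne_zero (sub_ne_zero.2 P.x_ne_one))

theorem x_mul_d0_ne_zero : P.x * P.d0 ≠ 0 := mul_ne_zero P.x_ne_zero P.d0_ne_zero

theorem c0_eq : P.c0 = P.a * P.x / (1 - P.x) := by
  have := P.x_ne_zero
  have : P.x⁻¹ - 1 = (1 - P.x) / P.x := by field_simp
  rw [c0, this, inv_div, mul_div_assoc]

theorem x_mul_a_add_c0 : P.x * (P.a + P.c0) = P.c0 := by
  have := sub_ne_zero.2 P.x_ne_one.symm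
  rw [c0_eq]
  field_simp
  ring

theorem b_add_d0 : P.b + P.d0 = P.x * P.d0 := by
  have := sub_ne_zero.2 P.x_ne_one
  simp only [d0]
  field_simp
  ring

theorem shift_eq : P.shift = (P.a ^ 2 - P.x * P.b ^ 2) / P.a := by
  have h1 : P.x - 1 ≠ 0 := sub_ne_zero.2 P.x_ne_one
  have h2 : 1 - P.x ≠ 0 := sub_ne_zero.2 P.x_ne_one.symm
  have := P.a_ne_zero
  have := P.x_ne_zero
  rw [shift, c0_eq, d0]
  field_simp
  ring

theorem shift_ne_zero : P.shift ≠ 0 := by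
  rw [shift_eq, div_ne_zero_iff, sub_ne_zero]
  refine ⟨fun h => P.isPrimitiveRoot.not_isSquare P.ne_two ⟨P.a / P.b, ?_⟩, P.a_ne_zero⟩
  have := P.b_ne_zero
  field_simp
  linear_combination -h

theorem shift_ne_a : P.shift ≠ P.a := by
  rw [shift, add_ne_left]
  exact mul_ne_zero (mul_ne_zero (mul_ne_zero (pow_ne_zero 2 P.x_ne_zero) P.b_ne_zero)
    P.d0_ne_zero) (inv_ne_zero P.c0_ne_zero)

theorem x_mul_inv_cancel : P.x * P.x⁻¹ = 1 := mul_inv_cancel₀ P.x_ne_zero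

theorem f_injective : Injective P.f := piInvPiab_injective _ _ _ P.x_ne_zero

theorem c0_add_ne_zero {u : ZMod p} (hu : u ≠ -P.c0) : P.c0 + u ≠ 0 := by
  rwa [Ne, add_comm, ← eq_neg_iff_add_eq_zero]

theorem f_pt {u v : ZMod p} (hu : u ≠ -P.c0) (hv : v ≠ -(P.x * P.d0)) :
    P.f (P.pt u v) = P.pt (P.x * u) (P.x⁻¹ * v) := by
  have hv' : P.b + (P.d0 + v) ≠ 0 := by
    rwa [← add_assoc, b_add_d0, Ne, add_comm, ← eq_neg_iff_add_eq_zero]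
  rw [pt, f, piInvPiab_of_ne_zero (P.c0_add_ne_zero hu) hv', pt, Prod.mk.injEq]
  constructor
  · linear_combination P.x_mul_a_add_c0
  · field_simp [P.x_ne_zero]
    linear_combination P.b_add_d0

theorem f_pt_neg_c0 {v : ZMod p} (hv : v + P.a ≠ -(P.x * P.d0)) :
    P.f (P.pt (-P.c0) v) = P.pt (P.x * -P.c0) (P.x⁻¹ * (v + P.a)) := by
  have hv' : P.a + P.b + (P.d0 + v) ≠ 0 := by
    contrapose! hv; linear_combination hv - P.b_add_d0
  rw [pt, f, add_neg_cancel, piInvPiab_zero hv', pt, Prod.mk.injEq]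
  constructor
  · linear_combination P.x_mul_a_add_c0
  · field_simp [P.x_ne_zero]
    linear_combination P.b_add_d0

theorem f_pt_neg_c0_of_add_eq {v : ZMod p} (hv : v + P.a = -(P.x * P.d0)) :
    P.f (P.pt (-P.c0) v) = P.pt (P.x * -P.c0 + P.x ^ 2 * P.b) (-P.d0) := by
  rw [pt, f, add_neg_cancel, piInvPiab_zero_of_eq_zero
    (by linear_combination hv + P.b_add_d0), pt, Prod.mk.injEq]
  constructor
  · linear_combination P.x_mul_a_add_c0
  · ring

theorem f_pt_neg_x_mul_d0 {u : ZMod p} (hu : u ≠ -P.c0) :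
    P.f (P.pt u (-(P.x * P.d0))) = P.pt (P.x * u + P.x ^ 2 * P.b) (-P.d0) := by
  rw [pt, f, piInvPiab_of_eq_neg (P.c0_add_ne_zero hu)
    (by linear_combination P.b_add_d0), pt, Prod.mk.injEq]
  constructor
  · linear_combination P.x_mul_a_add_c0
  · ring

theorem f_eq_self_iff (q : ZMod p × ZMod p) : P.f q = q ↔ q = (P.c0, P.d0) := by
  have hx1 : P.x - 1 ≠ 0 := sub_ne_zero.2 P.x_ne_one
  constructor
  · obtain ⟨c, d⟩ := q
    intro h
    rcases eq_or_ne c 0 with rfl | hc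
    · by_cases hd : P.a + P.b + d = 0
      · rw [f, piInvPiab_zero_of_eq_zero hd, Prod.mk.injEq] at h
        have hb : (P.x - 1) * P.b = 0 := by
          linear_combination (mul_eq_zero.1 h.1).resolve_left P.x_ne_zero - hd - h.2
        exact absurd ((mul_eq_zero.1 hb).resolve_left hx1) P.b_ne_zero
      · rw [f, piInvPiab_zero hd, Prod.mk.injEq] at h
        exact absurd h.1 (mul_ne_zero P.x_ne_zero P.a_ne_zero)
    · by_cases hd : P.b + d = 0
      · rw [f, piInvPiab_of_eq_neg hc hd, Prod.mk.injEq] at h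
        exact absurd (by linear_combination hd + h.2) P.b_ne_zero
      · rw [f, piInvPiab_of_ne_zero hc hd, Prod.mk.injEq] at h
        have hc' : (P.x - 1) * (c - P.c0) = 0 := by linear_combination h.1 - P.x_mul_a_add_c0
        have hd' : (P.x - 1) * (d - P.d0) = 0 := by
          linear_combination -P.x * h.2 + P.b_add_d0 + (P.b + d) * P.x_mul_inv_cancel
        rw [Prod.mk.injEq, ← sub_eq_zero, ← sub_eq_zero (a := d)]
        exact ⟨(mul_eq_zero.1 hc').resolve_left hx1, (mul_eq_zero.1 hd').resolve_left hx1⟩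
  · rintro rfl
    simpa [pt] using P.f_pt (neg_ne_zero.2 P.c0_ne_zero).symm
      (neg_ne_zero.2 P.x_mul_d0_ne_zero).symm

theorem stepOffVertical_pt {u v : ZMod p} {z : ZMod p × ZMod p} (hu : u ≠ 0)
    (h : P.f (P.pt u v) = z) :
    P.StepOffVertical (P.pt u v) z :=
  ⟨by simpa [pt] using hu, h⟩

theorem iterate_f_pt {u v : ZMod p} {n : ℕ}
    (h : ∀ i < n, P.x ^ i * u ≠ -P.c0 ∧ P.x⁻¹ ^ i * v ≠ -(P.x * P.d0)) :
    P.f^[n] (P.pt u v) = P.pt (P.x ^ n * u) (P.x⁻¹ ^ n * v) := by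
  induction n with
  | zero => simp
  | succ n ih =>
    rw [iterate_succ_apply', ih fun i hi => h i (hi.trans n.lt_succ_self),
      P.f_pt (h n n.lt_succ_self).1 (h n n.lt_succ_self).2, pow_succ', pow_succ', mul_assoc,
      mul_assoc]

theorem reflTransGen_pt {u v : ZMod p} {n : ℕ} (hu : u ≠ 0)
    (h : ∀ i < n, P.x ^ i * u ≠ -P.c0 ∧ P.x⁻¹ ^ i * v ≠ -(P.x * P.d0)) :
    ReflTransGen P.StepOffVertical (P.pt u v) (P.pt (P.x ^ n * u) (P.x⁻¹ ^ n * v)) := by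
  rw [← P.iterate_f_pt h]
  refine reflTransGen_stepWithin_iterate fun i hi => ?_
  rw [P.iterate_f_pt fun j hj => h j (hj.trans hi)]
  simpa [pt] using And.intro (pow_ne_zero i P.x_ne_zero) hu

theorem reflTransGen_horizontal {u : ZMod p} (hu : u ≠ 0) :
    ReflTransGen P.StepOffVertical (P.pt u 0) (P.pt (-P.c0) 0) := by
  obtain ⟨n, -, hn, hfirst⟩ :=
    P.isPrimitiveRoot.exists_pow_mul_eq_first hu (neg_ne_zero.2 P.c0_ne_zero)
  simpa [hn] using P.reflTransGen_pt hu (v := 0) fun i hi =>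
    ⟨hfirst i hi, by rw [mul_zero]; exact (neg_ne_zero.2 P.x_mul_d0_ne_zero).symm⟩

theorem mem_orbit_vertical {v : ZMod p} (hv : v ≠ 0) :
    P.pt 0 (-(P.x * P.d0)) ∈ orbit P.f (P.pt 0 v) := by
  obtain ⟨n, -, hn, hfirst⟩ :=
    P.isPrimitiveRoot.inv.exists_pow_mul_eq_first hv (neg_ne_zero.2 P.x_mul_d0_ne_zero)
  have := P.iterate_f_pt (u := 0) fun i hi =>
    ⟨by rw [mul_zero]; exact (neg_ne_zero.2 P.c0_ne_zero).symm, hfirst i hi⟩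
  rw [mul_zero, hn] at this
  exact ⟨n, this⟩

theorem reflTransGen_to_fst_eq_zero {u : ZMod p} (hu : u ≠ 0) :
    ReflTransGen P.StepOffVertical (P.pt u (-P.d0)) (P.pt (-P.c0) (P.d0 * u / P.c0)) := by
  obtain ⟨j, hj, hju, hfirst⟩ :=
    P.isPrimitiveRoot.exists_pow_mul_eq_first hu (neg_ne_zero.2 P.c0_ne_zero)
  have hend : P.x⁻¹ ^ j * -P.d0 = P.d0 * u / P.c0 := by
    have := P.c0_ne_zero
    have := pow_ne_zero j P.x_ne_zero
    rw [inv_pow]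
    field_simp
    linear_combination -P.d0 * hju
  rw [← hju, ← hend]
  refine P.reflTransGen_pt hu fun i hi => ⟨hfirst i hi, fun h => ?_⟩
  have hinv : P.x⁻¹ ^ i = P.x := mul_right_cancel₀ P.d0_ne_zero (by linear_combination -h)
  refine P.pow_ne_one (n := i + 1) (by omega) (by omega) ?_
  calc P.x ^ (i + 1) = P.x ^ i * P.x⁻¹ ^ i := by rw [hinv, pow_succ]
    _ = 1 := by rw [← mul_pow, P.x_mul_inv_cancel, one_pow]

theorem c0_mul_add_shift (v : ZMod p) :
    P.c0 * (v + P.shift) = P.c0 * (v + P.a) + P.x ^ 2 * P.b * P.d0 := by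
  rw [shift]
  field_simp [P.c0_ne_zero]
  ring

theorem exists_transGen_to_snd_eq_zero {v : ZMod p} (hv : v + P.a ≠ 0) :
    ∃ u, P.d0 * u = P.c0 * (v + P.shift) ∧
      TransGen P.StepOffVertical (P.pt (-P.c0) v) (P.pt u (-P.d0)) := by
  have hc0 := neg_ne_zero.2 P.c0_ne_zero
  obtain ⟨k, hk, hkv, hfirst⟩ :=
    P.isPrimitiveRoot.inv.exists_pow_mul_eq_first hv (neg_ne_zero.2 P.x_mul_d0_ne_zero)
  cases k with
  | zero =>
    rw [pow_zero, one_mul] at hkv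
    refine ⟨_, ?_, .single (P.stepOffVertical_pt hc0 (P.f_pt_neg_c0_of_add_eq hkv))⟩
    rw [c0_mul_add_shift, hkv]
    ring
  | succ j =>
    have hw : v + P.a = -(P.x ^ (j + 2) * P.d0) := by
      rw [inv_pow, inv_mul_eq_iff_eq_mul₀ (pow_ne_zero _ P.x_ne_zero)] at hkv
      linear_combination hkv
    have hu : ∀ i ≤ j, P.x ^ i * (P.x * -P.c0) ≠ -P.c0 := fun i hi h =>
      P.pow_ne_one (n := i + 1) (by omega) (by omega)
        (mul_right_cancel₀ hc0 (by rw [pow_succ]; linear_combination h))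
    have hP := P.f_pt_neg_c0 (by simpa using hfirst 0 (by omega))
    have hflow := P.reflTransGen_pt (mul_ne_zero P.x_ne_zero hc0) (n := j) fun i hi =>
      ⟨hu i hi.le, by rw [← mul_assoc, ← pow_succ]; exact hfirst (i + 1) (by omega)⟩
    have hend : P.x⁻¹ ^ j * (P.x⁻¹ * (v + P.a)) = -(P.x * P.d0) := by
      rw [← mul_assoc, ← pow_succ, hkv]
    rw [hend] at hflow
    have hQ := P.stepOffVertical_pt (mul_ne_zero (pow_ne_zero _ P.x_ne_zero)
      (mul_ne_zero P.x_ne_zero hc0)) (P.f_pt_neg_x_mul_d0 (hu j le_rfl))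
    refine ⟨_, ?_, .head' (P.stepOffVertical_pt hc0 hP) (hflow.tail hQ)⟩
    rw [c0_mul_add_shift, hw]
    ring

theorem transGen_return {v : ZMod p} (ha : v ≠ -P.a) (hs : v ≠ -P.shift) :
    TransGen P.StepOffVertical (P.pt (-P.c0) v) (P.pt (-P.c0) (v + P.shift)) := by
  obtain ⟨u, hu, hpath⟩ :=
    P.exists_transGen_to_snd_eq_zero (v := v) (by rwa [Ne, add_eq_zero_iff_eq_neg])
  have hu0 : u ≠ 0 := by
    rintro rfl
    rw [mul_zero, eq_comm, mul_eq_zero, add_eq_zero_iff_eq_neg] at hu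
    exact hu.elim P.c0_ne_zero hs
  have hend : P.d0 * u / P.c0 = v + P.shift := by rw [hu]; field_simp [P.c0_ne_zero]
  exact hpath.trans_left (hend ▸ P.reflTransGen_to_fst_eq_zero hu0)

theorem transGen_horizontal_exit :
    TransGen P.StepOffVertical (P.pt (-P.c0) (-P.a)) (P.pt (-P.c0) 0) := by
  have hc0 := neg_ne_zero.2 P.c0_ne_zero
  have hP := P.f_pt_neg_c0 (v := -P.a)
    (by rw [neg_add_cancel]; exact (neg_ne_zero.2 P.x_mul_d0_ne_zero).symm)
  rw [neg_add_cancel, mul_zero] at hP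
  exact .head' (P.stepOffVertical_pt hc0 hP)
    (P.reflTransGen_horizontal (mul_ne_zero P.x_ne_zero hc0))

theorem transGen_vertical_exit :
    TransGen P.StepOffVertical (P.pt (-P.c0) (-P.shift)) (P.pt 0 (-P.d0)) := by
  obtain ⟨u, hu, hpath⟩ := P.exists_transGen_to_snd_eq_zero (v := -P.shift)
    (by rw [Ne, neg_add_eq_zero]; exact P.shift_ne_a)
  rw [neg_add_cancel, mul_zero, mul_eq_zero] at hu
  rwa [hu.resolve_left P.d0_ne_zero] at hpath

theorem reflTransGen_iterate_return {v : ZMod p} {n : ℕ}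
    (h : ∀ i < n, v + i * P.shift ≠ -P.a ∧ v + i * P.shift ≠ -P.shift) :
    ReflTransGen P.StepOffVertical (P.pt (-P.c0) v) (P.pt (-P.c0) (v + n * P.shift)) := by
  induction n with
  | zero => simpa using ReflTransGen.refl
  | succ n ih =>
    have hn := P.transGen_return (h n n.lt_succ_self).1 (h n n.lt_succ_self).2
    rw [add_assoc, ← add_one_mul, ← Nat.cast_succ] at hn
    exact (ih fun i hi => h i (hi.trans n.lt_succ_self)).trans hn.to_reflTransGen

theorem natCast_mul_shift_ne_zero {k : ℕ} (hk0 : k ≠ 0) (hkp : k < p) :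
    (k : ZMod p) * P.shift ≠ 0 :=
  mul_ne_zero (by rwa [Ne, ZMod.natCast_eq_zero_iff, Nat.dvd_iff_mod_eq_zero, Nat.mod_eq_of_lt hkp])
    P.shift_ne_zero

theorem transGen_pt_neg_c0_zero :
    TransGen P.StepOffVertical (P.pt (-P.c0) 0) (P.pt (-P.c0) 0) := by
  set m := (-P.a / P.shift).val
  have hm : (m : ZMod p) * P.shift = -P.a := by
    rw [ZMod.natCast_zmod_val, div_mul_cancel₀ _ P.shift_ne_zero]
  have hmp : m < p := ZMod.val_lt _
  have hpath := P.reflTransGen_iterate_return (v := 0) (n := m) fun i hi => by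
    refine ⟨fun h => P.natCast_mul_shift_ne_zero (k := m - i) (by omega) (by omega) ?_,
      fun h => P.natCast_mul_shift_ne_zero (k := i + 1) (by omega) (by omega) ?_⟩
    · rw [Nat.cast_sub hi.le]; linear_combination hm - h
    · push_cast; linear_combination h
  rw [zero_add, hm] at hpath
  exact .trans_right hpath P.transGen_horizontal_exit

def ReachesAxis (q : ZMod p × ZMod p) : Prop := ∃ z ∈ orbit P.f q, z.1 = P.c0 ∨ z.2 = P.d0

theorem ReachesAxis.of_mem_orbit {P : PiabParams p} {q z : ZMod p × ZMod p} (h : z ∈ orbit P.f q)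
    (hz : P.ReachesAxis z) : P.ReachesAxis q :=
  let ⟨w, hw, hax⟩ := hz
  ⟨w, orbit_subset_of_mem h hw, hax⟩

theorem reachesAxis_of_transGen {q z : ZMod p × ZMod p} (h : TransGen P.StepOffVertical q z)
    (hz : z.1 = P.c0 ∨ z.2 = P.d0) : P.ReachesAxis q :=
  ⟨z, mem_orbit_of_reflTransGen h.to_reflTransGen, hz⟩

theorem reachesAxis_of_fst_eq_zero (v : ZMod p) : P.ReachesAxis (P.pt (-P.c0) v) := by
  classical
  have hex : ∃ n : ℕ, v + n * P.shift = -P.a ∨ v + n * P.shift = -P.shift :=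
    ⟨((-P.a - v) / P.shift).val, Or.inl (by
      rw [ZMod.natCast_zmod_val, div_mul_cancel₀ _ P.shift_ne_zero]; ring)⟩
  have hpath := P.reflTransGen_iterate_return fun i hi => not_or.1 (Nat.find_min hex hi)
  refine .of_mem_orbit (mem_orbit_of_reflTransGen hpath) ?_
  rcases Nat.find_spec hex with h | h <;> rw [h]
  · exact P.reachesAxis_of_transGen P.transGen_horizontal_exit (Or.inr (by simp [pt]))
  · exact P.reachesAxis_of_transGen P.transGen_vertical_exit (Or.inl (by simp [pt]))

theorem reachesAxis_of_snd_eq_zero (u : ZMod p) : P.ReachesAxis (P.pt u (-P.d0)) := by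
  rcases eq_or_ne u 0 with rfl | hu
  · exact ⟨_, ⟨0, rfl⟩, Or.inl (by simp [pt])⟩
  · exact .of_mem_orbit (mem_orbit_of_reflTransGen (P.reflTransGen_to_fst_eq_zero hu))
      (P.reachesAxis_of_fst_eq_zero _)

/-- Off the axes and the line `c = 0`, the map acts as `(u, v) ↦ (x u, x⁻¹ v)` until `u` reaches
`-c0` or `v` reaches `-x d0`, whichever comes first. -/
theorem reachesAxis (q : ZMod p × ZMod p) : P.ReachesAxis q := by
  obtain ⟨u, v, rfl⟩ : ∃ u v, q = P.pt u v := ⟨q.1 - P.c0, q.2 - P.d0, by simp [pt]⟩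
  rcases eq_or_ne u 0 with rfl | hu0
  · exact ⟨_, ⟨0, rfl⟩, Or.inl (by simp [pt])⟩
  rcases eq_or_ne v 0 with rfl | hv0
  · exact ⟨_, ⟨0, rfl⟩, Or.inr (by simp [pt])⟩
  rcases eq_or_ne u (-P.c0) with rfl | huc
  · exact P.reachesAxis_of_fst_eq_zero v
  obtain ⟨n, -, hn, hnfirst⟩ :=
    P.isPrimitiveRoot.exists_pow_mul_eq_first hu0 (neg_ne_zero.2 P.c0_ne_zero)
  obtain ⟨m, -, hm, hmfirst⟩ :=
    P.isPrimitiveRoot.inv.exists_pow_mul_eq_first hv0 (neg_ne_zero.2 P.x_mul_d0_ne_zero)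
  rcases le_or_gt n m with hnm | hmn
  · have hflow := P.iterate_f_pt (n := n) fun i hi => ⟨hnfirst i hi, hmfirst i (hi.trans_le hnm)⟩
    rw [hn] at hflow
    exact .of_mem_orbit ⟨n, hflow⟩ (P.reachesAxis_of_fst_eq_zero _)
  · have hflow := P.iterate_f_pt (n := m) fun i hi => ⟨hnfirst i (hi.trans hmn), hmfirst i hi⟩
    rw [hm] at hflow
    have hQ : P.f^[m + 1] (P.pt u v) = P.pt (P.x * (P.x ^ m * u) + P.x ^ 2 * P.b) (-P.d0) := by
      rw [iterate_succ_apply', hflow, P.f_pt_neg_x_mul_d0 (hnfirst m hmn)]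
    exact .of_mem_orbit ⟨m + 1, hQ⟩ (P.reachesAxis_of_snd_eq_zero _)

theorem pt_neg_c0_zero : P.pt (-P.c0) 0 = (0, P.d0) := by simp [pt]

theorem pt_zero_neg_x_mul_d0 : P.pt 0 (-(P.x * P.d0)) = (P.c0, -P.b) := by
  simp only [pt, add_zero, Prod.mk.injEq, true_and]
  linear_combination P.b_add_d0

theorem orbit_eq_orbit_zero_d0 {q : ZMod p × ZMod p} (h2 : q.2 = P.d0) (h1 : q.1 ≠ P.c0) :
    orbit P.f q = orbit P.f (0, P.d0) := by
  obtain ⟨c, d⟩ := q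
  obtain rfl : d = P.d0 := h2
  have hpath := P.reflTransGen_horizontal (u := c - P.c0) (sub_ne_zero.2 h1)
  rw [pt_neg_c0_zero, pt, add_sub_cancel, add_zero] at hpath
  exact orbit_eq_of_mem P.f_injective (mem_orbit_of_reflTransGen hpath) |>.symm

theorem orbit_eq_orbit_c0_neg_b {q : ZMod p × ZMod p} (h1 : q.1 = P.c0) (h2 : q.2 ≠ P.d0) :
    orbit P.f q = orbit P.f (P.c0, -P.b) := by
  obtain ⟨c, d⟩ := q
  obtain rfl : c = P.c0 := h1
  have hmem := P.mem_orbit_vertical (v := d - P.d0) (sub_ne_zero.2 h2)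
  rw [pt_zero_neg_x_mul_d0, pt, add_sub_cancel, add_zero] at hmem
  exact (orbit_eq_of_mem P.f_injective hmem).symm

theorem c0_neg_b_not_mem_orbit_zero_d0 : (P.c0, -P.b) ∉ orbit P.f (0, P.d0) := fun h =>
  (P.pt_neg_c0_zero ▸ orbit_subset_of_transGen P.transGen_pt_neg_c0_zero) h rfl

theorem orbit_eq_or_eq {w : ZMod p × ZMod p} (hw : P.f w ≠ w) :
    orbit P.f w = orbit P.f (0, P.d0) ∨ orbit P.f w = orbit P.f (P.c0, -P.b) := by
  obtain ⟨z, hz, hax⟩ := P.reachesAxis w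
  have hfix : z ≠ (P.c0, P.d0) := by
    rintro rfl
    have hwz : w ∈ orbit P.f (P.c0, P.d0) := orbit_eq_of_mem P.f_injective hz ▸ ⟨0, rfl⟩
    rw [orbit_eq_singleton ((P.f_eq_self_iff _).2 rfl)] at hwz
    exact hw (hwz ▸ (P.f_eq_self_iff _).2 rfl)
  rw [← orbit_eq_of_mem P.f_injective hz]
  rcases hax with h | h
  · exact .inr (P.orbit_eq_orbit_c0_neg_b h fun h' => hfix (Prod.ext h h'))
  · exact .inl (P.orbit_eq_orbit_zero_d0 h fun h' => hfix (Prod.ext h' h))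

end PiabParams

/-- For `a ≠ 0` and `b ≠ 0`, the permutation `π⁻¹ ∘ π_{(a,b)}` has exactly one fixed
point, namely `(a·(y−1)⁻¹, b·(x−1)⁻¹)` (with `y = x⁻¹`), and exactly two orbits of
size at least 2; the orbit of `(0, b·(x−1)⁻¹)` contains all of
`{(c, b·(x−1)⁻¹) : c ≠ a·(y−1)⁻¹}`, and the other orbit contains all of
`{(a·(y−1)⁻¹, d) : d ≠ b·(x−1)⁻¹}`. -/
theorem stmt16 (p : ℕ) (hp : p.Prime) (hodd : Odd p) (x : ZMod p)
    (hx : ∀ z : ZMod p, z ≠ 0 → ∃ k : ℕ, x ^ k = z)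
    (a b : ZMod p) (ha : a ≠ 0) (hb : b ≠ 0) :
    (∀ cd : ZMod p × ZMod p,
      piInvPiab x a b cd = cd ↔ cd = (a * (x⁻¹ - 1)⁻¹, b * (x - 1)⁻¹)) ∧
    ∃ v : ZMod p × ZMod p,
      2 ≤ (orbit (piInvPiab x a b) (0, b * (x - 1)⁻¹)).ncard ∧
      2 ≤ (orbit (piInvPiab x a b) v).ncard ∧
      orbit (piInvPiab x a b) (0, b * (x - 1)⁻¹) ≠ orbit (piInvPiab x a b) v ∧
      (∀ w : ZMod p × ZMod p, 2 ≤ (orbit (piInvPiab x a b) w).ncard →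
        orbit (piInvPiab x a b) w = orbit (piInvPiab x a b) (0, b * (x - 1)⁻¹) ∨
        orbit (piInvPiab x a b) w = orbit (piInvPiab x a b) v) ∧
      {q : ZMod p × ZMod p | q.2 = b * (x - 1)⁻¹ ∧ q.1 ≠ a * (x⁻¹ - 1)⁻¹} ⊆
        orbit (piInvPiab x a b) (0, b * (x - 1)⁻¹) ∧
      {q : ZMod p × ZMod p | q.1 = a * (x⁻¹ - 1)⁻¹ ∧ q.2 ≠ b * (x - 1)⁻¹} ⊆
        orbit (piInvPiab x a b) v := by
  have : Fact p.Prime := ⟨hp⟩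
  have hprim := isPrimitiveRoot_of_forall_exists_pow_eq (ne_zero_of_forall_exists_pow_eq hodd hx) hx
  let P : PiabParams p := ⟨x, a, b, hprim, by rintro rfl; exact absurd hodd (by decide), ha, hb⟩
  have hmoved : ∀ q, q ≠ (P.c0, P.d0) → 2 ≤ (orbit P.f q).ncard := fun q hq =>
    two_le_ncard_orbit_iff.2 fun h => hq ((P.f_eq_self_iff q).1 h)
  refine ⟨P.f_eq_self_iff, (P.c0, -P.b),
    hmoved _ fun h => P.c0_ne_zero (congrArg Prod.fst h).symm,
    hmoved _ fun h => P.x_mul_d0_ne_zero ?_,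
    fun h => P.c0_neg_b_not_mem_orbit_zero_d0 (h ▸ ⟨0, rfl⟩),
    fun w hw => P.orbit_eq_or_eq (two_le_ncard_orbit_iff.1 hw),
    fun q ⟨h2, h1⟩ => P.orbit_eq_orbit_zero_d0 h2 h1 ▸ ⟨0, rfl⟩,
    fun q ⟨h1, h2⟩ => P.orbit_eq_orbit_c0_neg_b h1 h2 ▸ ⟨0, rfl⟩⟩
  linear_combination -P.b_add_d0 - congrArg Prod.snd h
end

section
/- Let p be an odd prime, let x ∈ ZMod p be a primitive root mod p, let y = x⁻¹, and let i ∈ ZMod p with i ≠ 0. The permutation of ZMod p given by a ↦ (a + i)·y has exactly one fixed point, namely i·(x−1)⁻¹, and the orbit of 0 under this permutation is the whole set ZMod p \ {i·(x−1)⁻¹}, which has p − 1 elements. -/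
/-!
The map `f a = (a + i)·x⁻¹` is affine with fixed point `F = i·(x−1)⁻¹`, and conjugating by the
translation `a ↦ a − F` turns it into multiplication by `x⁻¹`. Hence `fᵏ(0) = F·(1 − x⁻ᵏ)`, and
since the powers of the primitive root `x` run through all nonzero residues, these values run
through everything except `F`.
-/

lemma ne_zero_of_pow_eq {M : Type*} [MonoidWithZero M] {x z : M} {k : ℕ} (h : x ^ k = z)
    (hz0 : z ≠ 0) (hz1 : z ≠ 1) : x ≠ 0 := by
  rintro rfl
  rcases k with _ | k
  · exact hz1 (by simpa using h.symm)
  · exact hz0 (by simpa using h.symm)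

lemma ne_one_of_pow_eq {M : Type*} [Monoid M] {x z : M} {k : ℕ} (h : x ^ k = z)
    (hz1 : z ≠ 1) : x ≠ 1 := by
  rintro rfl
  exact hz1 (by simpa using h.symm)

section AffineMap

variable {K : Type*} [Field K] {x i : K}

lemma affine_eq_self_iff (hx0 : x ≠ 0) (hx1 : x ≠ 1) (a : K) :
    (a + i) * x⁻¹ = a ↔ a = i * (x - 1)⁻¹ := by
  have hxm1 : x - 1 ≠ 0 := sub_ne_zero.mpr hx1
  rw [eq_mul_inv_iff_mul_eq₀ hxm1, mul_inv_eq_iff_eq_mul₀ hx0]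
  constructor <;> intro h <;> linear_combination -h

lemma iterate_affine_zero (hx0 : x ≠ 0) (hx1 : x ≠ 1) (k : ℕ) :
    (fun a : K => (a + i) * x⁻¹)^[k] 0 = i * (x - 1)⁻¹ * (1 - x⁻¹ ^ k) := by
  have hxm1 : (x - 1)⁻¹ * (x - 1) = 1 := inv_mul_cancel₀ (sub_ne_zero.mpr hx1)
  have hxx : x⁻¹ * x = 1 := inv_mul_cancel₀ hx0
  induction k with
  | zero => simp
  | succ k ih =>
    rw [Function.iterate_succ_apply', ih]
    linear_combination (-i * x⁻¹) * hxm1 + i * (x - 1)⁻¹ * hxx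

lemma orbit_affine_zero (hx0 : x ≠ 0) (hx1 : x ≠ 1) (hgen : ∀ z : K, z ≠ 0 → ∃ k : ℕ, x ^ k = z)
    (hi : i ≠ 0) :
    orbit (fun a : K => (a + i) * x⁻¹) 0 = Set.univ \ {i * (x - 1)⁻¹} := by
  set F := i * (x - 1)⁻¹
  have hF : F ≠ 0 := mul_ne_zero hi (inv_ne_zero (sub_ne_zero.mpr hx1))
  ext v
  simp only [orbit, iterate_affine_zero hx0 hx1, Set.mem_ofPred_eq, Set.mem_sdiff,
    Set.mem_univ, Set.mem_singleton_iff, true_and]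
  constructor
  · rintro ⟨k, rfl⟩ hfix
    have : F * x⁻¹ ^ k = 0 := by linear_combination -hfix
    exact mul_ne_zero hF (pow_ne_zero k (inv_ne_zero hx0)) this
  · intro hv
    have hFv : F - v ≠ 0 := sub_ne_zero.mpr (Ne.symm hv)
    obtain ⟨k, hk⟩ := hgen (F / (F - v)) (div_ne_zero hF hFv)
    refine ⟨k, ?_⟩
    rw [inv_pow, hk, inv_div, mul_one_sub, mul_div_cancel₀ _ hF, sub_sub_cancel]

end AffineMap

/-- For `i ≠ 0`, the permutation `a ↦ (a + i)·y` of `ZMod p` (with `y = x⁻¹`) has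
exactly one fixed point, namely `i·(x−1)⁻¹`, and the orbit of `0` is all of
`ZMod p \ {i·(x−1)⁻¹}`, which has `p − 1` elements. -/
theorem stmt18 (p : ℕ) (hp : p.Prime) (hodd : Odd p) (x : ZMod p)
    (hx : ∀ z : ZMod p, z ≠ 0 → ∃ k : ℕ, x ^ k = z) (i : ZMod p) (hi : i ≠ 0) :
    (∀ a : ZMod p, (a + i) * x⁻¹ = a ↔ a = i * (x - 1)⁻¹) ∧
    orbit (fun a : ZMod p => (a + i) * x⁻¹) 0 = Set.univ \ {i * (x - 1)⁻¹} ∧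
    (orbit (fun a : ZMod p => (a + i) * x⁻¹) 0).ncard = p - 1 := by
  have : Fact p.Prime := ⟨hp⟩
  have : Fact (2 < p) := ⟨hp.two_le.lt_of_ne (by rintro rfl; exact absurd hodd (by decide))⟩
  obtain ⟨k, hk⟩ := hx (-1) (neg_ne_zero.mpr one_ne_zero)
  have hx0 : x ≠ 0 := ne_zero_of_pow_eq hk (neg_ne_zero.mpr one_ne_zero) ZMod.neg_one_ne_one
  have hx1 : x ≠ 1 := ne_one_of_pow_eq hk ZMod.neg_one_ne_one
  have horbit := orbit_affine_zero hx0 hx1 hx hi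
  refine ⟨affine_eq_self_iff hx0 hx1, horbit, ?_⟩
  rw [horbit, Set.ncard_sdiff_singleton_of_mem (Set.mem_univ _), Set.ncard_univ, Nat.card_zmod]
end
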